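/- arXiv:2304.14217 — 14 statements merged into one kernel-verified Lean document; each statement's English description precedes it below -/
import Mathlib

section
/- Let X and Y be random variables on a probability space such that E[X] and E[Y] are well-defined and finite, and suppose that for some real η > 0 the strong ESI X ⊴_η Y holds, i.e. E[exp(η(X − Y))] ≤ 1. Then E[X] ≤ E[Y], and moreover the inequality is strict unless X = Y almost surely. -/
/-!
Put `Z = η (X - Y)`. The ESI hypothesis says `E[exp Z] ≤ 1`, so Jensen's inequality for the strictly
convex function `exp` gives `exp E[Z] ≤ E[exp Z] ≤ 1`, i.e. `η (E[X] - E[Y]) ≤ 0`. If equality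
`E[X] = E[Y]` holds, then `exp E[Z] = 1 = E[exp Z]`, which by strict convexity forces `Z` to be
a.s. constant, equal to `E[Z] = 0`.
-/

open MeasureTheory

namespace MeasureTheory

variable {α : Type*} [MeasurableSpace α] {μ : Measure α}

theorem Integrable.of_lintegral_ofReal_le {g : α → ℝ} (hgm : AEStronglyMeasurable g μ)
    (hg : 0 ≤ᵐ[μ] g) {c : ℝ} (h : ∫⁻ x, ENNReal.ofReal (g x) ∂μ ≤ ENNReal.ofReal c) :
    Integrable g μ :=
  ⟨hgm, (hasFiniteIntegral_iff_ofReal hg).2 (h.trans_lt ENNReal.ofReal_lt_top)⟩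

theorem integral_le_of_lintegral_ofReal_le {g : α → ℝ} (hg : 0 ≤ᵐ[μ] g) {c : ℝ} (hc : 0 ≤ c)
    (h : ∫⁻ x, ENNReal.ofReal (g x) ∂μ ≤ ENNReal.ofReal c) : ∫ x, g x ∂μ ≤ c := by
  by_cases hgi : Integrable g μ
  · rwa [← ofReal_integral_eq_lintegral_ofReal hgi hg, ENNReal.ofReal_le_ofReal_iff hc] at h
  · rwa [integral_undef hgi]

variable [IsProbabilityMeasure μ] {Z : α → ℝ}

theorem integral_nonpos_of_integral_exp_le_one (hZ : Integrable Z μ)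
    (hexp : Integrable (fun x ↦ Real.exp (Z x)) μ) (h : ∫ x, Real.exp (Z x) ∂μ ≤ 1) :
    ∫ x, Z x ∂μ ≤ 0 := by
  have jensen : Real.exp (∫ x, Z x ∂μ) ≤ ∫ x, Real.exp (Z x) ∂μ :=
    convexOn_exp.map_integral_le Real.continuous_exp.continuousOn isClosed_univ
      (.of_forall fun _ ↦ Set.mem_univ _) hZ hexp
  exact Real.exp_le_one_iff.1 (jensen.trans h)

theorem ae_eq_zero_of_integral_exp_le_one (hZ : Integrable Z μ)
    (hexp : Integrable (fun x ↦ Real.exp (Z x)) μ) (h : ∫ x, Real.exp (Z x) ∂μ ≤ 1)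
    (h0 : ∫ x, Z x ∂μ = 0) : Z =ᵐ[μ] 0 := by
  have strict_jensen := strictConvexOn_exp.ae_eq_const_or_map_average_lt
    Real.continuous_exp.continuousOn isClosed_univ (.of_forall fun _ ↦ Set.mem_univ _) hZ hexp
  simp only [average_eq_integral, h0, Real.exp_zero] at strict_jensen
  exact strict_jensen.resolve_right h.not_gt

end MeasureTheory

theorem esi_expectation_order_general {Ω : Type*} [MeasurableSpace Ω]
    (P : Measure Ω) [IsProbabilityMeasure P]
    (X Y : Ω → ℝ)
    (hX : Integrable X P) (hY : Integrable Y P)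
    (η : ℝ) (hη : 0 < η)
    (hESI : ∫⁻ ω, ENNReal.ofReal (Real.exp (η * (X ω - Y ω))) ∂P ≤ 1) :
    ∫ ω, X ω ∂P ≤ ∫ ω, Y ω ∂P ∧
      ((∫ ω, X ω ∂P) = ∫ ω, Y ω ∂P → X =ᵐ[P] Y) := by
  set Z : Ω → ℝ := fun ω ↦ η * (X ω - Y ω)
  have hZ : Integrable Z P := (hX.sub hY).const_mul η
  have hZ_integral : ∫ ω, Z ω ∂P = η * (∫ ω, X ω ∂P - ∫ ω, Y ω ∂P) := by
    rw [integral_const_mul, integral_sub hX hY]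
  rw [← ENNReal.ofReal_one] at hESI
  have hexp_nonneg : 0 ≤ᵐ[P] fun ω ↦ Real.exp (Z ω) := .of_forall fun _ ↦ (Real.exp_pos _).le
  have hexp : Integrable (fun ω ↦ Real.exp (Z ω)) P :=
    .of_lintegral_ofReal_le (Real.continuous_exp.comp_aestronglyMeasurable hZ.1) hexp_nonneg hESI
  have hexp_le : ∫ ω, Real.exp (Z ω) ∂P ≤ 1 :=
    integral_le_of_lintegral_ofReal_le hexp_nonneg zero_le_one hESI
  refine ⟨?_, fun hXY ↦ ?_⟩
  · have hZ_nonpos := integral_nonpos_of_integral_exp_le_one hZ hexp hexp_le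
    rw [hZ_integral] at hZ_nonpos
    exact sub_nonpos.1 (nonpos_of_mul_nonpos_right hZ_nonpos hη)
  · have hZ0 := ae_eq_zero_of_integral_exp_le_one hZ hexp hexp_le
      (by rw [hZ_integral, hXY, sub_self, mul_zero])
    filter_upwards [hZ0] with ω hω
    exact sub_eq_zero.1 ((mul_eq_zero.1 hω).resolve_left hη.ne')

/-- Strong ESI implies ordering in expectation, strictly unless `X = Y` a.s. -/
theorem esi_expectation_order {Ω : Type*} [MeasurableSpace Ω]
    (P : Measure Ω) [IsProbabilityMeasure P]
    (X Y : Ω → ℝ) (hXm : Measurable X) (hYm : Measurable Y)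
    (hX : Integrable X P) (hY : Integrable Y P)
    (η : ℝ) (hη : 0 < η)
    (hESI : ∫⁻ ω, ENNReal.ofReal (Real.exp (η * (X ω - Y ω))) ∂P ≤ 1) :
    ∫ ω, X ω ∂P ≤ ∫ ω, Y ω ∂P ∧
      ((∫ ω, X ω ∂P) = ∫ ω, Y ω ∂P → X =ᵐ[P] Y) :=
  esi_expectation_order_general P X Y hX hY η hη hESI
end

section
/- Let X and Y be random variables and let u be an ESI function such that the general ESI X ⊴_u Y holds, i.e. for every ε > 0, E[exp(u(ε)(X − Y))] ≤ exp(u(ε)·ε). Then for every ε > 0 and every K > 0, P(X ≥ Y + ε + K) ≤ exp(−u(ε)·K); equivalently, for every δ ∈ (0,1], with probability at least 1 − δ one has X ≤ Y + inf_{ε>0} ( log(1/δ)/u(ε) + ε ). -/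
open MeasureTheory

/-- A general ESI `X ⊴_u Y` yields high-probability ordering of `X` and `Y`. -/
theorem esi_high_probability {Ω : Type*} [MeasurableSpace Ω]
    (P : Measure Ω) [IsProbabilityMeasure P]
    (X Y : Ω → ℝ) (hXm : Measurable X) (hYm : Measurable Y)
    (u : ℝ → ℝ)
    (hu_cont : ContinuousOn u (Set.Ioi 0))
    (hu_mono : MonotoneOn u (Set.Ioi 0))
    (hu_pos : ∀ ε : ℝ, 0 < ε → 0 < u ε)
    (hESI : ∀ ε : ℝ, 0 < ε →
      ∫⁻ ω, ENNReal.ofReal (Real.exp (u ε * (X ω - Y ω))) ∂P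
        ≤ ENNReal.ofReal (Real.exp (u ε * ε))) :
    (∀ ε : ℝ, 0 < ε → ∀ K : ℝ, 0 < K →
      P {ω | Y ω + ε + K ≤ X ω} ≤ ENNReal.ofReal (Real.exp (-(u ε) * K))) ∧
    (∀ δ : ℝ, 0 < δ → δ ≤ 1 →
      1 - ENNReal.ofReal δ ≤
        P {ω | X ω ≤ Y ω + sInf {r : ℝ | ∃ ε : ℝ, 0 < ε ∧
          r = Real.log (1 / δ) / u ε + ε}}) := by
  have key : ∀ ε : ℝ, 0 < ε → ∀ K : ℝ, 0 < K →
      P {ω | Y ω + ε + K ≤ X ω} ≤ ENNReal.ofReal (Real.exp (-(u ε) * K)) := by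
    intro ε hε K hK
    set c := u ε with hc
    have hcpos : 0 < c := hu_pos ε hε
    have hfm : AEMeasurable (fun ω => ENNReal.ofReal (Real.exp (c * (X ω - Y ω)))) P :=
      (ENNReal.measurable_ofReal.comp
        (Real.measurable_exp.comp ((hXm.sub hYm).const_mul c))).aemeasurable
    have hset : {ω | Y ω + ε + K ≤ X ω}
        = {ω | ENNReal.ofReal (Real.exp (c * (ε + K)))
            ≤ ENNReal.ofReal (Real.exp (c * (X ω - Y ω)))} := by
      ext ω
      simp only [Set.mem_setOf_eq]
      rw [ENNReal.ofReal_le_ofReal_iff (Real.exp_pos _).le, Real.exp_le_exp]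
      constructor
      · intro h; nlinarith
      · intro h; nlinarith
    have hmar := mul_meas_ge_le_lintegral₀ (μ := P) hfm
      (ENNReal.ofReal (Real.exp (c * (ε + K))))
    rw [← hset] at hmar
    have h2 : ENNReal.ofReal (Real.exp (c * (ε + K))) * P {ω | Y ω + ε + K ≤ X ω}
        ≤ ENNReal.ofReal (Real.exp (c * (ε + K))) * ENNReal.ofReal (Real.exp (-c * K)) := by
      refine hmar.trans ((hESI ε hε).trans ?_)
      rw [← ENNReal.ofReal_mul (Real.exp_pos _).le, ← Real.exp_add]
      exact ENNReal.ofReal_le_ofReal (Real.exp_le_exp.mpr (le_of_eq (by ring)))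
    exact (ENNReal.mul_le_mul_iff_right (ENNReal.ofReal_pos.mpr (Real.exp_pos _)).ne'
      ENNReal.ofReal_ne_top).mp h2
  refine ⟨key, ?_⟩
  intro δ hδ hδ1
  rcases eq_or_lt_of_le hδ1 with h1 | h1
  · subst h1; simp
  -- now δ < 1
  set L : ℝ := Real.log (1 / δ) with hL
  have hLpos : 0 < L := Real.log_pos (by rw [lt_div_iff₀ hδ]; linarith)
  set S : Set ℝ := {r : ℝ | ∃ ε : ℝ, 0 < ε ∧ r = L / u ε + ε} with hS
  have hSne : S.Nonempty := ⟨L / u 1 + 1, 1, one_pos, rfl⟩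
  have hSbdd : BddBelow S := by
    refine ⟨0, ?_⟩
    rintro r ⟨ε, hε, rfl⟩
    have := hu_pos ε hε
    positivity
  set m : ℝ := sInf S with hm
  set s : Set Ω := {ω | X ω ≤ Y ω + m} with hs
  have hsm : MeasurableSet s := measurableSet_le hXm (hYm.add measurable_const)
  have hcompl : P sᶜ ≤ ENNReal.ofReal δ := by
    have hceq : sᶜ = ⋃ n : ℕ, {ω | Y ω + (m + 1 / (n + 1)) ≤ X ω} := by
      ext ω
      simp only [Set.mem_compl_iff, hs, Set.mem_setOf_eq, not_le, Set.mem_iUnion]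
      constructor
      · intro h
        obtain ⟨n, hn⟩ := exists_nat_one_div_lt (sub_pos.mpr h)
        exact ⟨n, by linarith⟩
      · rintro ⟨n, hn⟩
        have : (0:ℝ) < 1 / (n + 1) := by positivity
        linarith
    have hbound : ∀ n : ℕ, P {ω | Y ω + (m + 1 / (n + 1)) ≤ X ω} ≤ ENNReal.ofReal δ := by
      intro n
      have hpos : (0:ℝ) < 1 / (n + 1) := by positivity
      obtain ⟨r, hrS, hrlt⟩ := (csInf_lt_iff hSbdd hSne).mp
        (by linarith : sInf S < m + 1 / (n + 1))
      obtain ⟨ε, hε, rfl⟩ := hrS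
      have hK : 0 < L / u ε := div_pos hLpos (hu_pos ε hε)
      have hsub : {ω | Y ω + (m + 1 / (n + 1)) ≤ X ω} ⊆ {ω | Y ω + ε + (L / u ε) ≤ X ω} := by
        intro ω hω
        simp only [Set.mem_setOf_eq] at hω ⊢
        linarith
      refine (measure_mono hsub).trans ((key ε hε (L / u ε) hK).trans ?_)
      have huε := hu_pos ε hε
      have : -(u ε) * (L / u ε) = -L := by field_simp
      rw [this]
      have : Real.exp (-L) = δ := by
        rw [hL, Real.log_div one_ne_zero (ne_of_gt hδ), Real.log_one]
        simp [Real.exp_log hδ]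
      rw [this]
    rw [hceq]
    have hmono : Monotone (fun n : ℕ => {ω | Y ω + (m + 1 / (n + 1)) ≤ X ω}) := by
      intro a b hab ω hω
      simp only [Set.mem_setOf_eq] at hω ⊢
      have h1 : (1:ℝ) / (b + 1) ≤ 1 / (a + 1) := by
        apply one_div_le_one_div_of_le (by positivity)
        exact_mod_cast Nat.succ_le_succ hab
      linarith
    rw [Directed.measure_iUnion hmono.directed_le]
    exact iSup_le hbound
  have htotal : P s + P sᶜ = 1 := by
    rw [measure_add_measure_compl hsm]; exact measure_univ
  rw [tsub_le_iff_right]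
  calc (1 : ENNReal) = P s + P sᶜ := htotal.symm
    _ ≤ P s + ENNReal.ofReal δ := add_le_add_right hcompl _
end

section
/- Let X and Y be random variables on a probability space. Then X ≤ Y almost surely if and only if for every real η > 0 the strong ESI X ⊴_η Y holds, i.e. E[exp(η(X − Y))] ≤ 1 for every η > 0. -/
open MeasureTheory

/-- `X ≤ Y` almost surely iff the strong ESI `X ⊴_η Y` holds for every `η > 0`. -/
theorem ae_le_iff_esi_forall_eta {Ω : Type*} [MeasurableSpace Ω]
    (P : Measure Ω) [IsProbabilityMeasure P]
    (X Y : Ω → ℝ) (hXm : Measurable X) (hYm : Measurable Y) :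
    X ≤ᵐ[P] Y ↔
      ∀ η : ℝ, 0 < η →
        ∫⁻ ω, ENNReal.ofReal (Real.exp (η * (X ω - Y ω))) ∂P ≤ 1 := by
  constructor
  · intro h η hη
    calc ∫⁻ ω, ENNReal.ofReal (Real.exp (η * (X ω - Y ω))) ∂P
        ≤ ∫⁻ _, 1 ∂P := by
          refine lintegral_mono_ae (h.mono fun ω hω => ?_)
          rw [ENNReal.ofReal_le_one]
          exact Real.exp_le_one_iff.mpr
            (mul_nonpos_of_nonneg_of_nonpos hη.le (by linarith))
      _ = 1 := by simp
  · intro h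
    by_contra hc
    rw [Filter.EventuallyLE, ae_iff] at hc
    have hsub : {ω | ¬ X ω ≤ Y ω} ⊆ ⋃ n : ℕ, {ω | Y ω + 1/(n+1) ≤ X ω} := by
      intro ω hω
      simp only [Set.mem_setOf_eq, not_le] at hω
      obtain ⟨n, hn⟩ := exists_nat_one_div_lt (sub_pos.mpr hω)
      exact Set.mem_iUnion.mpr ⟨n, by simp only [Set.mem_setOf_eq]; linarith⟩
    have hA : ∃ n : ℕ, P {ω | Y ω + 1/(n+1 : ℝ) ≤ X ω} ≠ 0 := by
      by_contra hall
      push_neg at hall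
      exact hc (measure_mono_null hsub (by simpa using measure_iUnion_null hall))
    obtain ⟨n, hn⟩ := hA
    set A := {ω | Y ω + 1/(n+1 : ℝ) ≤ X ω} with hAdef
    have hAmeas : MeasurableSet A := measurableSet_le (hYm.add measurable_const) hXm
    set c := P A with hcdef
    have hc1 : c ≤ 1 := prob_le_one
    have hcfin : c ≠ ⊤ := (lt_of_le_of_lt hc1 ENNReal.one_lt_top).ne
    have hcRpos : 0 < c.toReal := ENNReal.toReal_pos hn hcfin
    have hcR1 : c.toReal ≤ 1 := by
      rw [← ENNReal.toReal_one]
      exact ENNReal.toReal_mono ENNReal.one_ne_top hc1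
    set ε : ℝ := 1/(n+1) with hε
    have hεpos : 0 < ε := by positivity
    set η : ℝ := (Real.log c.toReal⁻¹ + 1) / ε with hηdef
    have hlognn : 0 ≤ Real.log c.toReal⁻¹ :=
      Real.log_nonneg ((one_le_inv₀ hcRpos).mpr hcR1)
    have hηpos : 0 < η := div_pos (by linarith) hεpos
    have hηε : η * ε = Real.log c.toReal⁻¹ + 1 := div_mul_cancel₀ _ hεpos.ne'
    have hexp : c.toReal⁻¹ < Real.exp (η * ε) := by
      rw [hηε, Real.exp_add, Real.exp_log (by positivity)]
      nlinarith [Real.exp_one_gt_d9, inv_pos.mpr hcRpos]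
    have hkey : 1 < ∫⁻ ω, ENNReal.ofReal (Real.exp (η * (X ω - Y ω))) ∂P := by
      have hlow : ENNReal.ofReal (Real.exp (η * ε)) * c
          ≤ ∫⁻ ω, ENNReal.ofReal (Real.exp (η * (X ω - Y ω))) ∂P := by
        calc ENNReal.ofReal (Real.exp (η * ε)) * c
            = ∫⁻ _ω in A, ENNReal.ofReal (Real.exp (η * ε)) ∂P := by
              rw [setLIntegral_const]
          _ ≤ ∫⁻ ω in A, ENNReal.ofReal (Real.exp (η * (X ω - Y ω))) ∂P := by
              refine setLIntegral_mono
                ((Real.measurable_exp.comp ((hXm.sub hYm).const_mul η)).ennreal_ofReal)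
                fun ω hω => ?_
              have : ε ≤ X ω - Y ω := by
                simp only [hAdef, Set.mem_setOf_eq] at hω; linarith
              exact ENNReal.ofReal_le_ofReal
                (Real.exp_le_exp.mpr (mul_le_mul_of_nonneg_left this hηpos.le))
          _ ≤ ∫⁻ ω, ENNReal.ofReal (Real.exp (η * (X ω - Y ω))) ∂P :=
              setLIntegral_le_lintegral _ _
      have hcinv : c⁻¹ < ENNReal.ofReal (Real.exp (η * ε)) := by
        have : c⁻¹ = ENNReal.ofReal c.toReal⁻¹ := by
          rw [← ENNReal.toReal_inv, ENNReal.ofReal_toReal (ENNReal.inv_ne_top.mpr hn)]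
        rw [this]
        exact (ENNReal.ofReal_lt_ofReal_iff (Real.exp_pos _)).mpr hexp
      calc (1 : ENNReal) = c⁻¹ * c := (ENNReal.inv_mul_cancel hn hcfin).symm
        _ < ENNReal.ofReal (Real.exp (η * ε)) * c := by
            exact ENNReal.mul_lt_mul_left hn hcfin hcinv
        _ ≤ _ := hlow
    exact absurd (h η hηpos) (not_le.mpr hkey)
end

section
/- Let Z be a random variable and let a, b > 0 be constants such that P(Z ≥ ε) ≤ a·exp(−b·ε) for every ε > 0. Then for each η' with 0 < η' < b, the strong ESI Z ⊴_{η'} c holds, i.e. E[exp(η'(Z − c))] ≤ 1, where c = (1/η')·log(1 + a·η'/(b − η')). -/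
open MeasureTheory Set

/-- An exponentially small right tail implies a strong ESI with an explicit constant. -/
theorem exponential_tail_esi {Ω : Type*} [MeasurableSpace Ω]
    (P : Measure Ω) [IsProbabilityMeasure P]
    (Z : Ω → ℝ) (hZm : Measurable Z)
    (a b : ℝ) (ha : 0 < a) (hb : 0 < b)
    (htail : ∀ ε : ℝ, 0 < ε → P {ω | ε ≤ Z ω} ≤ ENNReal.ofReal (a * Real.exp (-b * ε)))
    (η' : ℝ) (hη'_pos : 0 < η') (hη'_lt : η' < b) :
    ∫⁻ ω, ENNReal.ofReal
      (Real.exp (η' * (Z ω - (1 / η') * Real.log (1 + a * η' / (b - η'))))) ∂P ≤ 1 := by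
  set S : ℝ := a * η' / (b - η') with hS
  have hbη : 0 < b - η' := by linarith
  have hSpos : 0 < S := by positivity
  set c : ℝ := (1 / η') * Real.log (1 + S) with hc
  have hexpc : Real.exp (η' * c) = 1 + S := by
    rw [hc]
    rw [show η' * ((1 / η') * Real.log (1 + S)) = Real.log (1 + S) by
      field_simp]
    exact Real.exp_log (by linarith)
  -- main bound : ∫⁻ exp(η' Z) ≤ ofReal (1 + S)
  have key : ∫⁻ ω, ENNReal.ofReal (Real.exp (η' * Z ω)) ∂P ≤ ENNReal.ofReal (1 + S) := by
    rw [lintegral_eq_lintegral_meas_le P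
      (Filter.Eventually.of_forall fun ω => (Real.exp_pos _).le)
      ((Real.measurable_exp.comp (hZm.const_mul η')).aemeasurable)]
    have hsplit : (Ioi (0:ℝ)) = Ioc (0:ℝ) 1 ∪ Ioi 1 := (Ioc_union_Ioi_eq_Ioi zero_le_one).symm
    rw [hsplit, lintegral_union measurableSet_Ioi (Ioc_disjoint_Ioi le_rfl)]
    have h1 : ∫⁻ t in Ioc (0:ℝ) 1, P {ω | t ≤ Real.exp (η' * Z ω)} ≤ 1 := by
      calc ∫⁻ t in Ioc (0:ℝ) 1, P {ω | t ≤ Real.exp (η' * Z ω)}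
          ≤ ∫⁻ _ in Ioc (0:ℝ) 1, 1 := lintegral_mono fun t => prob_le_one
        _ = 1 := by simp [Real.volume_Ioc]
    set p : ℝ := b / η' with hp
    have hp1 : 1 < p := (one_lt_div hη'_pos).2 hη'_lt
    have h2 : ∫⁻ t in Ioi (1:ℝ), P {ω | t ≤ Real.exp (η' * Z ω)}
        ≤ ENNReal.ofReal S := by
      have hbound : ∀ t ∈ Ioi (1:ℝ), P {ω | t ≤ Real.exp (η' * Z ω)}
          ≤ ENNReal.ofReal (a * t ^ (-p)) := by
        intro t ht
        have ht1 : (1:ℝ) < t := ht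
        have htpos : (0:ℝ) < t := by linarith
        have hlog : 0 < Real.log t := Real.log_pos ht1
        have hset : {ω | t ≤ Real.exp (η' * Z ω)} = {ω | Real.log t / η' ≤ Z ω} := by
          ext ω
          simp only [Set.mem_setOf_eq]
          rw [div_le_iff₀' hη'_pos, Real.log_le_iff_le_exp htpos]
        rw [hset]
        have := htail (Real.log t / η') (by positivity)
        convert this using 3
        rw [Real.rpow_def_of_pos htpos]
        ring_nf
        congr 1; rw [hp]; ring
      calc ∫⁻ t in Ioi (1:ℝ), P {ω | t ≤ Real.exp (η' * Z ω)}
          ≤ ∫⁻ t in Ioi (1:ℝ), ENNReal.ofReal (a * t ^ (-p)) :=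
            setLIntegral_mono_ae (by fun_prop)
              (Filter.Eventually.of_forall hbound)
        _ = ENNReal.ofReal (∫ t in Ioi (1:ℝ), a * t ^ (-p)) := by
            rw [← ofReal_integral_eq_lintegral_ofReal]
            · exact (integrableOn_Ioi_rpow_of_lt (by linarith) one_pos).const_mul a
            · filter_upwards [ae_restrict_mem measurableSet_Ioi] with t ht
              have : (0:ℝ) < t := lt_trans one_pos ht
              positivity
        _ = ENNReal.ofReal S := by
            rw [MeasureTheory.integral_const_mul, integral_Ioi_rpow_of_lt (by linarith) one_pos]
            congr 1
            rw [Real.one_rpow]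
            have hne1 : η' ≠ 0 := hη'_pos.ne'
            have hne2 : η' - b ≠ 0 := by linarith
            have hne3 : b - η' ≠ 0 := hbη.ne'
            rw [hS, hp]
            field_simp
            rw [show -b + η' = -(b - η') by ring, div_neg, neg_neg, div_self hne3]
    calc _ ≤ 1 + ENNReal.ofReal S := add_le_add h1 h2
      _ = ENNReal.ofReal (1 + S) := by
          rw [ENNReal.ofReal_add zero_le_one hSpos.le, ENNReal.ofReal_one]
  -- conclude
  have heq : ∀ ω, Real.exp (η' * (Z ω - c)) = Real.exp (-(η' * c)) * Real.exp (η' * Z ω) := by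
    intro ω
    rw [← Real.exp_add]
    ring_nf
  calc ∫⁻ ω, ENNReal.ofReal (Real.exp (η' * (Z ω - c))) ∂P
      = ∫⁻ ω, ENNReal.ofReal (Real.exp (-(η' * c))) * ENNReal.ofReal (Real.exp (η' * Z ω)) ∂P := by
        simp_rw [heq, ENNReal.ofReal_mul (Real.exp_pos _).le]
    _ = ENNReal.ofReal (Real.exp (-(η' * c))) * ∫⁻ ω, ENNReal.ofReal (Real.exp (η' * Z ω)) ∂P :=
        lintegral_const_mul _ (by fun_prop)
    _ ≤ ENNReal.ofReal (Real.exp (-(η' * c))) * ENNReal.ofReal (1 + S) :=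
        mul_le_mul_right key _
    _ = 1 := by
        rw [← hexpc, ← ENNReal.ofReal_mul (Real.exp_pos _).le, ← Real.exp_add,
          neg_add_cancel, Real.exp_zero, ENNReal.ofReal_one]
end

section
/- Let X_1, …, X_n be random variables (no independence assumed) such that for each i there is η_i > 0 with E[exp(η_i·X_i)] ≤ 1. Then with η = (∑_{i=1}^n 1/η_i)^{−1}, the sum S_n = ∑_{i=1}^n X_i satisfies E[exp(η·S_n)] ≤ 1 (i.e. S_n ⊴_η 0). -/
/-!
With `η = (∑ i, 1 / η i)⁻¹`, the weights `w i = η / η i` are nonnegative and sum to one, and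
`η • S = ∑ i, w i • (η i • X i)`. By convexity of `exp`,
`exp (η • S) ≤ ∑ i, w i • exp (η i • X i)` pointwise, so integrating gives
`E[exp (η • S)] ≤ ∑ i, w i • E[exp (η i • X i)] ≤ ∑ i, w i = 1`; no independence is needed.
-/

open MeasureTheory

/-- The strong ESI `X ⊴_η 0`: `E[exp (η X)] ≤ 1`, with the expectation taken as a lower integral. -/
def StrongESI {Ω : Type*} [MeasurableSpace Ω] (μ : Measure Ω) (η : ℝ) (X : Ω → ℝ) : Prop :=
  ∫⁻ ω, ENNReal.ofReal (Real.exp (η * X ω)) ∂μ ≤ 1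

section

variable {Ω ι : Type*} [MeasurableSpace Ω] {μ : Measure Ω}

theorem lintegral_ofReal_exp_sum_mul_le {s : Finset ι} {w : ι → ℝ} {Y : ι → Ω → ℝ}
    (hw₀ : ∀ i ∈ s, 0 ≤ w i) (hw₁ : ∑ i ∈ s, w i = 1) (hY : ∀ i ∈ s, AEMeasurable (Y i) μ) :
    ∫⁻ ω, ENNReal.ofReal (Real.exp (∑ i ∈ s, w i * Y i ω)) ∂μ ≤
      ∑ i ∈ s, ENNReal.ofReal (w i) * ∫⁻ ω, ENNReal.ofReal (Real.exp (Y i ω)) ∂μ := by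
  have hjensen : ∀ ω, Real.exp (∑ i ∈ s, w i * Y i ω) ≤ ∑ i ∈ s, w i * Real.exp (Y i ω) :=
    fun ω ↦ convexOn_exp.map_sum_le hw₀ hw₁ fun i _ ↦ Set.mem_univ (Y i ω)
  calc ∫⁻ ω, ENNReal.ofReal (Real.exp (∑ i ∈ s, w i * Y i ω)) ∂μ
      ≤ ∫⁻ ω, ∑ i ∈ s, ENNReal.ofReal (w i) * ENNReal.ofReal (Real.exp (Y i ω)) ∂μ := by
        refine lintegral_mono fun ω ↦ (ENNReal.ofReal_le_ofReal (hjensen ω)).trans_eq ?_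
        rw [ENNReal.ofReal_sum_of_nonneg fun i hi ↦ mul_nonneg (hw₀ i hi) (Real.exp_pos _).le]
        exact Finset.sum_congr rfl fun i hi ↦ ENNReal.ofReal_mul (hw₀ i hi)
    _ = ∑ i ∈ s, ENNReal.ofReal (w i) * ∫⁻ ω, ENNReal.ofReal (Real.exp (Y i ω)) ∂μ := by
        have hexp : ∀ i ∈ s, AEMeasurable (fun ω ↦ ENNReal.ofReal (Real.exp (Y i ω))) μ :=
          fun i hi ↦ ENNReal.measurable_ofReal.comp_aemeasurable
            (Real.measurable_exp.comp_aemeasurable (hY i hi))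
        rw [lintegral_finsetSum' _ fun i hi ↦ (hexp i hi).const_mul _]
        exact Finset.sum_congr rfl fun i hi ↦ lintegral_const_mul'' _ (hexp i hi)

theorem StrongESI.sum_harmonic [Fintype ι] [Nonempty ι] {X : ι → Ω → ℝ} {η : ι → ℝ}
    (hX : ∀ i, AEMeasurable (X i) μ) (hη : ∀ i, 0 < η i) (hESI : ∀ i, StrongESI μ (η i) (X i)) :
    StrongESI μ (∑ i, (η i)⁻¹)⁻¹ (fun ω ↦ ∑ i, X i ω) := by
  set s := ∑ i, (η i)⁻¹
  have hs : 0 < s := Finset.sum_pos (fun i _ ↦ inv_pos.2 (hη i)) Finset.univ_nonempty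
  have hw₀ : ∀ i ∈ Finset.univ, 0 ≤ s⁻¹ * (η i)⁻¹ := fun i _ ↦ by have := hη i; positivity
  have hw₁ : ∑ i, s⁻¹ * (η i)⁻¹ = 1 := by rw [← Finset.mul_sum, inv_mul_cancel₀ hs.ne']
  have hrewrite : ∀ ω, s⁻¹ * ∑ i, X i ω = ∑ i, s⁻¹ * (η i)⁻¹ * (η i * X i ω) := fun ω ↦ by
    rw [Finset.mul_sum]
    exact Finset.sum_congr rfl fun i _ ↦ by field_simp [(hη i).ne']
  calc ∫⁻ ω, ENNReal.ofReal (Real.exp (s⁻¹ * ∑ i, X i ω)) ∂μ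
      ≤ ∑ i, ENNReal.ofReal (s⁻¹ * (η i)⁻¹) * ∫⁻ ω, ENNReal.ofReal (Real.exp (η i * X i ω)) ∂μ := by
        simp_rw [hrewrite]
        exact lintegral_ofReal_exp_sum_mul_le hw₀ hw₁ fun i _ ↦ (hX i).const_mul _
    _ ≤ ∑ i, ENNReal.ofReal (s⁻¹ * (η i)⁻¹) * 1 :=
        Finset.sum_le_sum fun i _ ↦ mul_le_mul_right (hESI i) _
    _ = 1 := by
        simp_rw [mul_one]
        rw [← ENNReal.ofReal_sum_of_nonneg hw₀, hw₁, ENNReal.ofReal_one]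

end

theorem esi_sum_dependent_general {Ω : Type*} [MeasurableSpace Ω]
    (P : Measure Ω) [IsProbabilityMeasure P]
    (n : ℕ)
    (X : Fin n → Ω → ℝ) (hXm : ∀ i, Measurable (X i))
    (η : Fin n → ℝ) (hη : ∀ i, 0 < η i)
    (hESI : ∀ i, ∫⁻ ω, ENNReal.ofReal (Real.exp (η i * X i ω)) ∂P ≤ 1) :
    ∫⁻ ω, ENNReal.ofReal
      (Real.exp ((∑ i, (η i)⁻¹)⁻¹ * ∑ i, X i ω)) ∂P ≤ 1 := by
  rcases isEmpty_or_nonempty (Fin n) with hempty | hne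
  · simp
  · exact StrongESI.sum_harmonic (fun i ↦ (hXm i).aemeasurable) hη hESI

/-- Sums of ESI-negative random variables (no independence): harmonic combination of rates. -/
theorem esi_sum_dependent {Ω : Type*} [MeasurableSpace Ω]
    (P : Measure Ω) [IsProbabilityMeasure P]
    (n : ℕ) (hn : 0 < n)
    (X : Fin n → Ω → ℝ) (hXm : ∀ i, Measurable (X i))
    (η : Fin n → ℝ) (hη : ∀ i, 0 < η i)
    (hESI : ∀ i, ∫⁻ ω, ENNReal.ofReal (Real.exp (η i * X i ω)) ∂P ≤ 1) :
    ∫⁻ ω, ENNReal.ofReal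
      (Real.exp ((∑ i, (η i)⁻¹)⁻¹ * ∑ i, X i ω)) ∂P ≤ 1 :=
  esi_sum_dependent_general P n X hXm η hη hESI
end

section
/- Let X, Y, Z be random variables such that for some η_1, η_2 > 0 one has E[exp(η_1(X − Y))] ≤ 1 and E[exp(η_2(Y − Z))] ≤ 1. Then E[exp(η(X − Z))] ≤ 1, where η = (1/η_1 + 1/η_2)^{−1}; i.e. the strong ESI is transitive with harmonic combination of the parameters. -/
open MeasureTheory

/-- Transitivity of the strong ESI with harmonic combination of the parameters. -/
theorem esi_transitivity {Ω : Type*} [MeasurableSpace Ω]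
    (P : Measure Ω) [IsProbabilityMeasure P]
    (X Y Z : Ω → ℝ) (hXm : Measurable X) (hYm : Measurable Y) (hZm : Measurable Z)
    (η₁ η₂ : ℝ) (hη₁ : 0 < η₁) (hη₂ : 0 < η₂)
    (hXY : ∫⁻ ω, ENNReal.ofReal (Real.exp (η₁ * (X ω - Y ω))) ∂P ≤ 1)
    (hYZ : ∫⁻ ω, ENNReal.ofReal (Real.exp (η₂ * (Y ω - Z ω))) ∂P ≤ 1) :
    ∫⁻ ω, ENNReal.ofReal
      (Real.exp ((1 / η₁ + 1 / η₂)⁻¹ * (X ω - Z ω))) ∂P ≤ 1 := by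
  set η : ℝ := (1 / η₁ + 1 / η₂)⁻¹ with hη_def
  have hη : 0 < η := by rw [hη_def]; positivity
  set p : ℝ := η₁ / η with hp_def
  set q : ℝ := η₂ / η with hq_def
  have hηp : η * p = η₁ := by rw [hp_def]; field_simp
  have hηq : η * q = η₂ := by rw [hq_def]; field_simp
  have hpq : p.HolderConjugate q := by
    rw [Real.holderConjugate_iff]
    constructor
    · rw [hp_def, lt_div_iff₀ hη, one_mul, hη_def]
      rw [inv_lt_iff_one_lt_mul₀ (by positivity)]
      have h1 : η₁ * (1 / η₁ + 1 / η₂) = 1 + η₁ / η₂ := by field_simp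
      rw [h1]
      have : 0 < η₁ / η₂ := by positivity
      linarith
    · rw [hp_def, hq_def, inv_div, inv_div]
      have h2 : η / η₁ + η / η₂ = η * (1 / η₁ + 1 / η₂) := by ring
      rw [h2, hη_def, inv_mul_cancel₀ (by positivity)]
  set f : Ω → ENNReal := fun ω => ENNReal.ofReal (Real.exp (η * (X ω - Y ω))) with hf_def
  set g : Ω → ENNReal := fun ω => ENNReal.ofReal (Real.exp (η * (Y ω - Z ω))) with hg_def
  have hfm : AEMeasurable f P :=
    ((Real.measurable_exp.comp ((hXm.sub hYm).const_mul η)).ennreal_ofReal).aemeasurable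
  have hgm : AEMeasurable g P :=
    ((Real.measurable_exp.comp ((hYm.sub hZm).const_mul η)).ennreal_ofReal).aemeasurable
  have key := ENNReal.lintegral_mul_le_Lp_mul_Lq P hpq hfm hgm
  have hfp : ∀ ω, f ω ^ p = ENNReal.ofReal (Real.exp (η₁ * (X ω - Y ω))) := by
    intro ω
    show ENNReal.ofReal (Real.exp (η * (X ω - Y ω))) ^ p = _
    rw [ENNReal.ofReal_rpow_of_pos (Real.exp_pos _), ← Real.exp_mul,
      show η * (X ω - Y ω) * p = η₁ * (X ω - Y ω) by rw [← hηp]; ring]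
  have hgq : ∀ ω, g ω ^ q = ENNReal.ofReal (Real.exp (η₂ * (Y ω - Z ω))) := by
    intro ω
    show ENNReal.ofReal (Real.exp (η * (Y ω - Z ω))) ^ q = _
    rw [ENNReal.ofReal_rpow_of_pos (Real.exp_pos _), ← Real.exp_mul,
      show η * (Y ω - Z ω) * q = η₂ * (Y ω - Z ω) by rw [← hηq]; ring]
  calc ∫⁻ ω, ENNReal.ofReal (Real.exp (η * (X ω - Z ω))) ∂P
      = ∫⁻ ω, (f * g) ω ∂P := by
        refine lintegral_congr fun ω => ?_
        simp only [Pi.mul_apply, hf_def, hg_def]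
        rw [← ENNReal.ofReal_mul (Real.exp_nonneg _), ← Real.exp_add]
        ring_nf
    _ ≤ (∫⁻ ω, f ω ^ p ∂P) ^ (1 / p) * (∫⁻ ω, g ω ^ q ∂P) ^ (1 / q) := key
    _ ≤ 1 ^ (1 / p) * 1 ^ (1 / q) := by
        gcongr
        · simp_rw [hfp]; exact hXY
        · simp_rw [hgq]; exact hYZ
    _ = 1 := by simp
end

section
/- The strong ESI relation is antisymmetric up to almost-sure equality: if X and Y are integrable random variables such that E[exp(η_1(X − Y))] ≤ 1 and E[exp(η_2(Y − X))] ≤ 1 for some η_1, η_2 > 0, then X = Y almost surely. Together with reflexivity (X ⊴_η X for every η > 0) and transitivity, this shows that 'there exists η > 0 with X ⊴_η Y' defines a partial order on any set of integrable random variables (up to almost-sure equality). -/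
open MeasureTheory

lemma esi_aux {Ω : Type*} [MeasurableSpace Ω]
    (P : Measure Ω) [IsProbabilityMeasure P]
    (Z : Ω → ℝ) (hZm : Measurable Z) (hZint : Integrable Z P) (η : ℝ) (hη : 0 < η)
    (h : ∫⁻ ω, ENNReal.ofReal (Real.exp (η * Z ω)) ∂P ≤ 1) :
    Integrable (fun ω => Real.exp (η * Z ω)) P ∧
    (∫ ω, Real.exp (η * Z ω) ∂P ≤ 1) ∧ ∫ ω, Z ω ∂P ≤ 0 := by
  have hfm : Measurable fun ω => Real.exp (η * Z ω) :=
    Real.measurable_exp.comp (measurable_const.mul hZm)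
  have hnn : ∀ ω, 0 ≤ Real.exp (η * Z ω) := fun ω => (Real.exp_pos _).le
  have hfi : Integrable (fun ω => Real.exp (η * Z ω)) P := by
    refine ⟨hfm.aestronglyMeasurable, ?_⟩
    rw [hasFiniteIntegral_iff_ofReal (Filter.Eventually.of_forall hnn)]
    exact lt_of_le_of_lt h ENNReal.one_lt_top
  have hint_eq : ∫ ω, Real.exp (η * Z ω) ∂P
      = (∫⁻ ω, ENNReal.ofReal (Real.exp (η * Z ω)) ∂P).toReal := by
    rw [integral_eq_lintegral_of_nonneg_ae (Filter.Eventually.of_forall hnn)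
      hfm.aestronglyMeasurable]
  have hle1 : ∫ ω, Real.exp (η * Z ω) ∂P ≤ 1 := by
    rw [hint_eq]
    calc (∫⁻ ω, ENNReal.ofReal (Real.exp (η * Z ω)) ∂P).toReal
        ≤ (1 : ENNReal).toReal := ENNReal.toReal_mono ENNReal.one_ne_top h
      _ = 1 := by simp
  refine ⟨hfi, hle1, ?_⟩
  have hgi : Integrable (fun ω => η * Z ω + 1) P := (hZint.const_mul η).add (integrable_const 1)
  have hmono : ∫ ω, (η * Z ω + 1) ∂P ≤ ∫ ω, Real.exp (η * Z ω) ∂P := by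
    refine integral_mono hgi hfi fun ω => ?_
    have := Real.add_one_le_exp (η * Z ω)
    linarith
  have hcomp : ∫ ω, (η * Z ω + 1) ∂P = η * ∫ ω, Z ω ∂P + 1 := by
    rw [integral_add (hZint.const_mul η) (integrable_const 1), integral_const_mul,
      integral_const]
    simp
  nlinarith [hmono, hcomp, hle1]

/-- Antisymmetry of the strong ESI up to almost-sure equality. -/
theorem esi_antisymm {Ω : Type*} [MeasurableSpace Ω]
    (P : Measure Ω) [IsProbabilityMeasure P]
    (X Y : Ω → ℝ) (hXm : Measurable X) (hYm : Measurable Y)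
    (hX : Integrable X P) (hY : Integrable Y P)
    (η₁ η₂ : ℝ) (hη₁ : 0 < η₁) (hη₂ : 0 < η₂)
    (hXY : ∫⁻ ω, ENNReal.ofReal (Real.exp (η₁ * (X ω - Y ω))) ∂P ≤ 1)
    (hYX : ∫⁻ ω, ENNReal.ofReal (Real.exp (η₂ * (Y ω - X ω))) ∂P ≤ 1) :
    X =ᵐ[P] Y := by
  have h1 := esi_aux P (fun ω => X ω - Y ω) (hXm.sub hYm) (hX.sub hY) η₁ hη₁ hXY
  have h2 := esi_aux P (fun ω => Y ω - X ω) (hYm.sub hXm) (hY.sub hX) η₂ hη₂ hYX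
  obtain ⟨hfi, hle1, hZle⟩ := h1
  obtain ⟨-, -, hZge'⟩ := h2
  have hZint : Integrable (fun ω => X ω - Y ω) P := hX.sub hY
  have hZ0 : ∫ ω, (X ω - Y ω) ∂P = 0 := by
    have : ∫ ω, (Y ω - X ω) ∂P = - ∫ ω, (X ω - Y ω) ∂P := by
      rw [← integral_neg]; congr 1; ext ω; ring
    rw [this] at hZge'
    linarith
  -- the nonnegative function exp(η₁ Z) - (η₁ Z + 1) has zero integral
  set h : Ω → ℝ := fun ω => Real.exp (η₁ * (X ω - Y ω)) - (η₁ * (X ω - Y ω) + 1) with hh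
  have hhnn : ∀ ω, 0 ≤ h ω := by
    intro ω
    have := Real.add_one_le_exp (η₁ * (X ω - Y ω))
    simp only [hh]
    linarith
  have ha : Integrable (fun ω => η₁ * (X ω - Y ω)) P := hZint.const_mul η₁
  have hg : Integrable (fun ω => η₁ * (X ω - Y ω) + 1) P := ha.add (integrable_const 1)
  have hhint : Integrable h P := hfi.sub hg
  have hhI : ∫ ω, h ω ∂P = 0 := by
    have : ∫ ω, h ω ∂P
        = ∫ ω, Real.exp (η₁ * (X ω - Y ω)) ∂P - (η₁ * ∫ ω, (X ω - Y ω) ∂P + 1) := by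
      simp only [hh]
      rw [integral_sub hfi hg, integral_add ha (integrable_const 1), integral_const_mul,
        integral_const]
      simp
    rw [this, hZ0]
    have hge : 0 ≤ ∫ ω, h ω ∂P := integral_nonneg hhnn
    rw [‹∫ ω, h ω ∂P = _›] at hge
    rw [hZ0] at hge
    linarith
  have hae : h =ᵐ[P] 0 := (integral_eq_zero_iff_of_nonneg hhnn hhint).mp hhI
  filter_upwards [hae] with ω hω
  simp only [hh, Pi.zero_apply] at hω
  by_contra hne
  have hz : η₁ * (X ω - Y ω) ≠ 0 := by
    intro h0
    apply hne
    have : X ω - Y ω = 0 := by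
      rcases mul_eq_zero.mp h0 with h | h
      · exact absurd h (ne_of_gt hη₁)
      · exact h
    linarith
  have := Real.add_one_lt_exp hz
  linarith
end

section
/- (ESI-Markov inequality.) Let X be an integrable random variable and η > 0 be such that 0 ⊴_η X, i.e. E[exp(−η·X)] ≤ 1. Then for every a > 0, with p = P(X < 0) (and the convention p·log(1/p) = 0 when p = 0), P(X ≥ a) ≤ E[X]/a + p·log(1/p)/(η·a) ≤ E[X]/a + 1/(e·η·a). -/
open MeasureTheory

lemma esi_markov_aux_entropy (p : ℝ) (hp : 0 ≤ p) :
    p * Real.log (1 / p) ≤ Real.exp (-1) := by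
  rcases eq_or_lt_of_le hp with h | h
  · simp [← h]
    positivity
  · have key : Real.log (Real.exp (-1) / p) ≤ Real.exp (-1) / p - 1 :=
      Real.log_le_sub_one_of_pos (by positivity)
    have hlog : Real.log (Real.exp (-1) / p) = -1 - Real.log p := by
      rw [Real.log_div (Real.exp_ne_zero _) (ne_of_gt h), Real.log_exp]
    have h1 : Real.log (1 / p) ≤ Real.exp (-1) / p := by
      rw [one_div, Real.log_inv]
      rw [hlog] at key
      linarith
    calc p * Real.log (1 / p) ≤ p * (Real.exp (-1) / p) := by
          exact mul_le_mul_of_nonneg_left h1 hp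
      _ = Real.exp (-1) := by field_simp

/-- ESI-Markov inequality: a Markov-like inequality for ESI-positive random variables. -/
theorem esi_markov {Ω : Type*} [MeasurableSpace Ω]
    (P : Measure Ω) [IsProbabilityMeasure P]
    (X : Ω → ℝ) (hXm : Measurable X) (hX : Integrable X P)
    (η : ℝ) (hη : 0 < η)
    (hESI : ∫⁻ ω, ENNReal.ofReal (Real.exp (-η * X ω)) ∂P ≤ 1)
    (a : ℝ) (ha : 0 < a) :
    (P {ω | a ≤ X ω}).toReal ≤
        (∫ ω, X ω ∂P) / a +
          (P {ω | X ω < 0}).toReal * Real.log (1 / (P {ω | X ω < 0}).toReal) / (η * a) ∧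
      (∫ ω, X ω ∂P) / a +
          (P {ω | X ω < 0}).toReal * Real.log (1 / (P {ω | X ω < 0}).toReal) / (η * a) ≤
        (∫ ω, X ω ∂P) / a + 1 / (Real.exp 1 * η * a) := by
  set S : Set Ω := {ω | a ≤ X ω} with hSdef
  set A : Set Ω := {ω | X ω < 0} with hAdef
  have hSm : MeasurableSet S := measurableSet_le measurable_const hXm
  have hAm : MeasurableSet A := measurableSet_lt hXm measurable_const
  set p : ℝ := (P A).toReal with hpdef
  have hp0 : 0 ≤ p := ENNReal.toReal_nonneg
  -- the negative part
  set N : Ω → ℝ := fun ω => max (-X ω) 0 with hNdef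
  have hNint : Integrable N P := hX.neg.pos_part
  have hNeq : N = A.indicator (fun ω => -X ω) := by
    funext ω
    by_cases hω : ω ∈ A
    · have hlt : X ω < 0 := hω
      rw [Set.indicator_of_mem hω]
      exact max_eq_left (by linarith)
    · have hge : 0 ≤ X ω := not_lt.1 hω
      rw [Set.indicator_of_notMem hω]
      exact max_eq_right (by linarith)
  -- Step 1: a * P(S) ≤ E[X] + E[N]
  have step1 : a * (P S).toReal ≤ (∫ ω, X ω ∂P) + ∫ ω, N ω ∂P := by
    have hpt : ∀ ω, S.indicator (fun _ => a) ω ≤ X ω + N ω := by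
      intro ω
      by_cases hω : ω ∈ S
      · have hXa : a ≤ X ω := hω
        rw [Set.indicator_of_mem hω]
        have : 0 ≤ N ω := le_max_right _ _
        linarith
      · rw [Set.indicator_of_notMem hω]
        have h1 : -X ω ≤ N ω := le_max_left _ _
        linarith
    have hint := integral_mono ((integrable_const a).indicator hSm) (hX.add hNint) hpt
    rw [integral_indicator_const a hSm, smul_eq_mul, measureReal_def] at hint
    simp only [Pi.add_apply] at hint
    rw [integral_add hX hNint] at hint
    linarith [hint]
  -- Step 3: η * E[N] ≤ p * log (1/p)
  have step3 : ∫ ω, N ω ∂P ≤ p * Real.log (1 / p) / η := by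
    rcases eq_or_lt_of_le hp0 with hp | hp
    · -- p = 0
      have hPA : P A = 0 := by
        have := (ENNReal.toReal_eq_zero_iff _).1 hp.symm
        rcases this with h | h
        · exact h
        · exact absurd h (by simp [measure_ne_top])
      have hzero : ∫ ω, N ω ∂P = 0 := by
        rw [hNeq, integral_indicator hAm, Measure.restrict_eq_zero.2 hPA]
        simp
      rw [hzero, ← hp]
      simp
    · -- p > 0
      set c : ℝ := Real.log (1 / p) with hcdef
      set g : Ω → ℝ := fun ω => Real.exp (-η * X ω) with hgdef
      have hgm : Measurable g := (hXm.const_mul (-η)).exp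
      have hgnn : ∀ ω, 0 ≤ g ω := fun ω => (Real.exp_pos _).le
      have hgint : Integrable g P := by
        refine ⟨hgm.aestronglyMeasurable, ?_⟩
        rw [hasFiniteIntegral_iff_ofReal (Filter.Eventually.of_forall hgnn)]
        exact lt_of_le_of_lt hESI ENNReal.one_lt_top
      have hg1 : ∫ ω, g ω ∂P ≤ 1 := by
        rw [integral_eq_lintegral_of_nonneg_ae (Filter.Eventually.of_forall hgnn)
          hgm.aestronglyMeasurable]
        calc (∫⁻ ω, ENNReal.ofReal (g ω) ∂P).toReal ≤ (1 : ENNReal).toReal :=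
              ENNReal.toReal_mono (by simp) hESI
          _ = 1 := by simp
      -- pointwise inequality
      have hpt : ∀ ω, A.indicator (fun ω => -η * X ω + (1 - c)) ω ≤ Real.exp (-c) * g ω := by
        intro ω
        by_cases hω : ω ∈ A
        · rw [Set.indicator_of_mem hω]
          have h1 : (-η * X ω - c) + 1 ≤ Real.exp (-η * X ω - c) := Real.add_one_le_exp _
          have h2 : Real.exp (-η * X ω - c) = Real.exp (-c) * g ω := by
            rw [hgdef]
            rw [← Real.exp_add]
            ring_nf
          linarith [h2 ▸ h1]
        · rw [Set.indicator_of_notMem hω]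
          positivity
      have hLint : Integrable (A.indicator (fun ω => -η * X ω + (1 - c))) P :=
        ((hX.const_mul (-η)).add (integrable_const _)).indicator hAm
      have hint := integral_mono hLint (hgint.const_mul (Real.exp (-c))) hpt
      rw [integral_indicator hAm] at hint
      have hsplit : ∫ ω in A, (-η * X ω + (1 - c)) ∂P
          = -η * (∫ ω in A, X ω ∂P) + (1 - c) * p := by
        rw [integral_add ((hX.const_mul (-η)).integrableOn) (integrableOn_const
          (measure_ne_top _ _))]
        rw [integral_const_mul, setIntegral_const, smul_eq_mul, measureReal_def, hpdef]
        ring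
      have hrhs : ∫ ω, Real.exp (-c) * g ω ∂P ≤ p := by
        rw [integral_const_mul]
        have hec : Real.exp (-c) = p := by
          rw [hcdef, one_div, Real.log_inv, neg_neg, Real.exp_log hp]
        calc Real.exp (-c) * ∫ ω, g ω ∂P ≤ Real.exp (-c) * 1 :=
              mul_le_mul_of_nonneg_left hg1 (Real.exp_pos _).le
          _ = p := by rw [mul_one, hec]
      have hNint' : ∫ ω, N ω ∂P = -∫ ω in A, X ω ∂P := by
        rw [hNeq, integral_indicator hAm, integral_neg]
      have key : -η * (∫ ω in A, X ω ∂P) + (1 - c) * p ≤ p := le_trans (hsplit ▸ hint) hrhs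
      rw [hNint', le_div_iff₀ hη]
      nlinarith [key]
  -- combine
  have habs : (P S).toReal ≤ (∫ ω, X ω ∂P) / a + p * Real.log (1 / p) / (η * a) := by
    have h2 : (∫ ω, X ω ∂P) / a + p * Real.log (1 / p) / (η * a)
        = ((∫ ω, X ω ∂P) + p * Real.log (1 / p) / η) / a := by
      field_simp
    rw [h2, le_div_iff₀ ha]
    nlinarith [step1, step3]
  refine ⟨habs, ?_⟩
  have hent : p * Real.log (1 / p) ≤ Real.exp (-1) := esi_markov_aux_entropy p hp0
  have hηa : 0 < η * a := mul_pos hη ha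
  have : p * Real.log (1 / p) / (η * a) ≤ 1 / (Real.exp 1 * η * a) := by
    have h1 : Real.exp (-1) / (η * a) = 1 / (Real.exp 1 * η * a) := by
      rw [Real.exp_neg]
      field_simp
    rw [← h1]
    exact div_le_div_of_nonneg_right hent hηa.le
  linarith
end

section
/- Let U be a random variable with finite mean E[U] and finite variance Var[U], and suppose there are constants C ∈ ℝ and η* > 0 such that E[exp(η*(U − E[U]))] ≤ exp(η*·C). Then U − E[U] has a subgamma right tail: for every η with 0 < η < η*, E[exp(η(U − E[U]))] ≤ exp( (1/2)·v·η²/(1 − c·η) ), where v = Var[U] + 2·exp(η*·C)/(η*)² and c = 1/η*. -/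
open MeasureTheory ProbabilityTheory

lemma nonneg_of_deriv (f f' : ℝ → ℝ) (hd : ∀ w, HasDerivAt f (f' w) w)
    (h0 : 0 ≤ f 0) (hd' : ∀ w, 0 ≤ w → 0 ≤ f' w) : ∀ w, 0 ≤ w → 0 ≤ f w := by
  intro w hw
  have hmono : MonotoneOn f (Set.Ici 0) := by
    apply monotoneOn_of_deriv_nonneg (convex_Ici 0)
    · exact fun x _ => (hd x).continuousAt.continuousWithinAt
    · intro x _
      exact (hd x).differentiableAt.differentiableWithinAt
    · intro x hx
      rw [(hd x).deriv]
      rw [interior_Ici] at hx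
      exact hd' x (le_of_lt hx)
  exact le_trans h0 (hmono Set.self_mem_Ici hw hw)

lemma quad_bound {z : ℝ} (hz : z ≤ 0) : Real.exp z ≤ 1 + z + z ^ 2 / 2 := by
  have key : ∀ w, 0 ≤ w → 0 ≤ 1 + (-w) + (-w) ^ 2 / 2 - Real.exp (-w) := by
    apply nonneg_of_deriv _ (fun w => -1 + w + Real.exp (-w))
    · intro w
      have h1 : HasDerivAt (fun w : ℝ => Real.exp (-w)) (-Real.exp (-w)) w := by
        simpa [Function.comp_def] using (Real.hasDerivAt_exp (-w)).comp w ((hasDerivAt_id w).neg)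
      have h2 : HasDerivAt (fun w : ℝ => 1 + (-w) + (-w) ^ 2 / 2 - Real.exp (-w))
          ((-1 + w) - (-Real.exp (-w))) w := by
        have ha : HasDerivAt (fun w : ℝ => 1 + (-w) + (-w) ^ 2 / 2) (-1 + w) w := by
          have := ((hasDerivAt_id w).neg.const_add 1).add
            (((hasDerivAt_id w).neg.pow 2).div_const 2)
          convert this using 1
          · rfl
          · rfl
          · rfl
          simp
        exact ha.sub h1
      convert h2 using 1
      ring
    · norm_num
    · intro w hw
      have := Real.add_one_le_exp (-w)
      linarith
  have := key (-z) (by linarith)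
  simp only [neg_neg] at this
  linarith

lemma keyA {r : ℝ} (hr0 : 0 < r) (hr1 : r < 1) :
    ∀ w, 0 ≤ w → Real.exp (r * w) ≤
      1 + r * w + (r * w) ^ 2 / 2 + r ^ 3 / (1 - r) * Real.exp w := by
  have h1r : 0 < 1 - r := by linarith
  set c : ℝ := r ^ 3 / (1 - r) with hc
  have hc0 : 0 ≤ c := by positivity
  have hcr : r ^ 3 ≤ c := by
    rw [hc]
    rw [le_div_iff₀ h1r]
    nlinarith [pow_pos hr0 3]
  have hexp : ∀ w : ℝ, HasDerivAt (fun w => Real.exp (r * w)) (r * Real.exp (r * w)) w := by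
    intro w
    have := (Real.hasDerivAt_exp (r * w)).comp w ((hasDerivAt_id w).const_mul r)
    simpa [mul_comm, Function.comp_def] using this
  have hexp1 : ∀ w : ℝ, HasDerivAt (fun w => c * Real.exp w) (c * Real.exp w) w :=
    fun w => (Real.hasDerivAt_exp w).const_mul c
  -- level 2
  have h2 : ∀ w, 0 ≤ w → 0 ≤ r ^ 2 + c * Real.exp w - r ^ 2 * Real.exp (r * w) := by
    apply nonneg_of_deriv _ (fun w => c * Real.exp w - r ^ 3 * Real.exp (r * w))
    · intro w
      have := ((hexp1 w).const_add (r ^ 2)).sub ((hexp w).const_mul (r ^ 2))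
      convert this using 1
      · rfl
      · rfl
      · rfl
      ring
    · simp [hc0]
    · intro w hw
      have he : Real.exp (r * w) ≤ Real.exp w := by
        apply Real.exp_le_exp.2
        nlinarith
      nlinarith [Real.exp_pos (r * w), Real.exp_pos w, pow_pos hr0 3]
  -- level 1
  have h1 : ∀ w, 0 ≤ w → 0 ≤ r + r ^ 2 * w + c * Real.exp w - r * Real.exp (r * w) := by
    apply nonneg_of_deriv _ (fun w => r ^ 2 + c * Real.exp w - r ^ 2 * Real.exp (r * w))
    · intro w
      have := (((hasDerivAt_id w).const_mul (r ^ 2)).const_add r).add (hexp1 w) |>.sub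
        ((hexp w).const_mul r)
      convert this using 1
      · rfl
      · rfl
      · rfl
      ring
    · simp [hc0]
    · exact h2
  -- level 0
  have h0 : ∀ w, 0 ≤ w →
      0 ≤ 1 + r * w + (r * w) ^ 2 / 2 + c * Real.exp w - Real.exp (r * w) := by
    apply nonneg_of_deriv _ (fun w => r + r ^ 2 * w + c * Real.exp w - r * Real.exp (r * w))
    · intro w
      have ha : HasDerivAt (fun w : ℝ => 1 + r * w + (r * w) ^ 2 / 2)
          (r + r ^ 2 * w) w := by
        have := (((hasDerivAt_id w).const_mul r).const_add 1).add
          ((((hasDerivAt_id w).const_mul r).pow 2).div_const 2)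
        convert this using 1
        · rfl
        · rfl
        · rfl
        simp
        ring
      exact (ha.add (hexp1 w)).sub (hexp w)
    · simp [hc0]
    · exact h1
  intro w hw
  have := h0 w hw
  linarith
/-- A uniform strong ESI bound on `U - E[U]` implies a subgamma right tail. -/
theorem esi_implies_subgamma {Ω : Type*} [MeasurableSpace Ω]
    (P : Measure Ω) [IsProbabilityMeasure P]
    (U : Ω → ℝ) (hUm : Measurable U) (hU2 : MemLp U 2 P)
    (C ηstar : ℝ) (hηstar : 0 < ηstar)
    (hESI : ∫⁻ ω, ENNReal.ofReal (Real.exp (ηstar * (U ω - ∫ x, U x ∂P))) ∂P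
      ≤ ENNReal.ofReal (Real.exp (ηstar * C))) :
    ∀ η : ℝ, 0 < η → η < ηstar →
      ∫⁻ ω, ENNReal.ofReal (Real.exp (η * (U ω - ∫ x, U x ∂P))) ∂P ≤
        ENNReal.ofReal (Real.exp ((1 / 2) *
          (variance U P + 2 * Real.exp (ηstar * C) / ηstar ^ 2) * η ^ 2 /
            (1 - (1 / ηstar) * η))) := by
  intro η hη hηs
  set μ := ∫ x, U x ∂P with hμ
  set X : Ω → ℝ := fun ω => U ω - μ with hX
  set r : ℝ := η / ηstar with hr
  have hr0 : 0 < r := div_pos hη hηstar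
  have hr1 : r < 1 := (div_lt_one hηstar).2 hηs
  have h1r : 0 < 1 - r := by linarith
  set c : ℝ := r ^ 3 / (1 - r) with hcdef
  have hc0 : 0 ≤ c := by positivity
  set E : ℝ := Real.exp (ηstar * C) with hE
  have hE0 : 0 < E := Real.exp_pos _
  -- measurability and integrability
  have hXm : Measurable X := hUm.sub measurable_const
  have hX2 : MemLp X 2 P := hU2.sub (memLp_const μ)
  have hUint : Integrable U P := hU2.integrable one_le_two
  have hXint : Integrable X P := hX2.integrable one_le_two
  have hXsq : Integrable (fun ω => X ω ^ 2) P := hX2.integrable_sq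
  have hX0 : ∫ ω, X ω ∂P = 0 := by
    simp [hX, integral_sub hUint (integrable_const μ), ← hμ]
  have hvar : variance U P = ∫ ω, X ω ^ 2 ∂P := by
    rw [variance_eq_integral hU2.aemeasurable]
  have hV0 : 0 ≤ variance U P := variance_nonneg _ _
  -- pointwise bound
  have hpt : ∀ ω, Real.exp (η * X ω) ≤
      (1 + η * X ω + (η * X ω) ^ 2 / 2) + c * Real.exp (ηstar * X ω) := by
    intro ω
    rcases le_or_gt 0 (X ω) with h | h
    · have hk := keyA hr0 hr1 (ηstar * X ω) (by positivity)
      have hrw : r * (ηstar * X ω) = η * X ω := by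
        field_simp [hr]
        rw [hr, div_mul_cancel₀ η hηstar.ne']
        ring
      rw [hrw] at hk
      linarith
    · have hq := quad_bound (z := η * X ω) (by nlinarith)
      have hpos : 0 ≤ c * Real.exp (ηstar * X ω) := by positivity
      linarith
  have hquad_nn : ∀ ω, 0 ≤ 1 + η * X ω + (η * X ω) ^ 2 / 2 := by
    intro ω
    nlinarith [sq_nonneg (1 + η * X ω)]
  -- integrability of the quadratic part
  have hquad_int : Integrable (fun ω => 1 + η * X ω + (η * X ω) ^ 2 / 2) P := by
    have h2 : (fun ω => 1 + η * X ω + (η * X ω) ^ 2 / 2)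
        = fun ω => (1 + η * X ω) + (η ^ 2 / 2) * X ω ^ 2 := by
      funext ω; ring
    rw [h2]
    exact ((integrable_const 1).add (hXint.const_mul η)).add (hXsq.const_mul _)
  have hquad_val : ∫ ω, (1 + η * X ω + (η * X ω) ^ 2 / 2) ∂P
      = 1 + η ^ 2 / 2 * variance U P := by
    have ha : Integrable (fun ω => 1 + η * X ω) P :=
      (integrable_const 1).add (hXint.const_mul η)
    have hb : Integrable (fun ω => η ^ 2 / 2 * X ω ^ 2) P := hXsq.const_mul _
    have h2 : ∫ ω, (1 + η * X ω + (η * X ω) ^ 2 / 2) ∂P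
        = ∫ ω, ((1 + η * X ω) + η ^ 2 / 2 * X ω ^ 2) ∂P := by
      congr 1
      funext ω
      ring
    have h3 : Integrable (fun ω => η * X ω) P := hXint.const_mul η
    rw [h2, integral_add ha hb, integral_add (integrable_const 1) h3, integral_const,
      integral_const_mul, integral_const_mul, hX0, hvar]
    simp
  -- the main chain
  calc ∫⁻ ω, ENNReal.ofReal (Real.exp (η * X ω)) ∂P
      ≤ ∫⁻ ω, (ENNReal.ofReal (1 + η * X ω + (η * X ω) ^ 2 / 2)
          + ENNReal.ofReal (c * Real.exp (ηstar * X ω))) ∂P := by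
        apply lintegral_mono
        intro ω
        exact le_trans (ENNReal.ofReal_le_ofReal (hpt ω)) ENNReal.ofReal_add_le
    _ = (∫⁻ ω, ENNReal.ofReal (1 + η * X ω + (η * X ω) ^ 2 / 2) ∂P)
          + ∫⁻ ω, ENNReal.ofReal (c * Real.exp (ηstar * X ω)) ∂P := by
        apply lintegral_add_left
        exact ((measurable_const.add (hXm.const_mul η)).add
          (((hXm.const_mul η).pow measurable_const).div_const 2)).ennreal_ofReal
    _ ≤ ENNReal.ofReal (1 + η ^ 2 / 2 * variance U P) + ENNReal.ofReal (c * E) := by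
        gcongr
        · have heq : ∫⁻ ω, ENNReal.ofReal (1 + η * X ω + (η * X ω) ^ 2 / 2) ∂P
              = ENNReal.ofReal (∫ ω, (1 + η * X ω + (η * X ω) ^ 2 / 2) ∂P) :=
            (ofReal_integral_eq_lintegral_ofReal hquad_int
              (Filter.Eventually.of_forall hquad_nn)).symm
          rw [heq, hquad_val]
        · have : ∀ ω, ENNReal.ofReal (c * Real.exp (ηstar * X ω))
              = ENNReal.ofReal c * ENNReal.ofReal (Real.exp (ηstar * X ω)) := by
            intro ω
            exact ENNReal.ofReal_mul hc0
          simp only [this]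
          rw [lintegral_const_mul _ ((hXm.const_mul ηstar).exp.ennreal_ofReal),
            ENNReal.ofReal_mul hc0]
          exact mul_le_mul_right hESI _
    _ = ENNReal.ofReal ((1 + η ^ 2 / 2 * variance U P) + c * E) :=
        (ENNReal.ofReal_add (by nlinarith) (by positivity)).symm
    _ ≤ ENNReal.ofReal (Real.exp ((1 / 2) *
          (variance U P + 2 * E / ηstar ^ 2) * η ^ 2 / (1 - (1 / ηstar) * η))) := by
        apply ENNReal.ofReal_le_ofReal
        have h1 : (1 + η ^ 2 / 2 * variance U P) + c * E
            ≤ Real.exp (η ^ 2 / 2 * variance U P + c * E) := by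
          have := Real.add_one_le_exp (η ^ 2 / 2 * variance U P + c * E)
          linarith
        refine le_trans h1 (Real.exp_le_exp.2 ?_)
        have hden : 1 - (1 / ηstar) * η = 1 - r := by
          rw [hr]; ring
        rw [hden, le_div_iff₀ h1r]
        have hc' : c * (1 - r) = r ^ 3 := by
          rw [hcdef]
          field_simp
        have hr2 : r ^ 2 = η ^ 2 / ηstar ^ 2 := by
          rw [hr]
          ring
        have h3 : r ^ 3 ≤ r ^ 2 := by nlinarith
        have hA : η ^ 2 / 2 * variance U P * (1 - r) ≤ η ^ 2 / 2 * variance U P := by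
          nlinarith [mul_nonneg (mul_nonneg (sq_nonneg η) hV0) hr0.le]
        have hB : c * E * (1 - r) = r ^ 3 * E := by
          have hB0 : c * E * (1 - r) = (c * (1 - r)) * E := by ring
          rw [hB0, hc']
        have hC : r ^ 3 * E ≤ η ^ 2 / ηstar ^ 2 * E := by
          have := mul_le_mul_of_nonneg_right h3 hE0.le
          rw [hr2] at this
          exact this
        have hRHS : 1 / 2 * (variance U P + 2 * E / ηstar ^ 2) * η ^ 2
            = η ^ 2 / 2 * variance U P + η ^ 2 / ηstar ^ 2 * E := by ring
        have hLHS : (η ^ 2 / 2 * variance U P + c * E) * (1 - r)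
            = η ^ 2 / 2 * variance U P * (1 - r) + c * E * (1 - r) := by ring
        rw [hLHS, hRHS, hB]
        linarith
end

section
/- Let X be a random variable with finite mean and let c, v > 0 be such that X − E[X] has a (c,v)-subgamma right tail, i.e. E[exp(η(X − E[X]))] ≤ exp( v·η²/(2(1 − c·η)) ) for all η with 0 < c·η < 1. Then X − E[X] satisfies the general ESI X − E[X] ⊴_h 0 with the ESI function h(ε) = min( ε/(2v), 1/(2c) ): for every ε > 0, E[exp( h(ε)·(X − E[X]) )] ≤ exp( h(ε)·ε ). -/
open MeasureTheory

/-- A `(c,v)`-subgamma right tail of `X - E[X]` implies the general ESI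
`X - E[X] ⊴_h 0` with `h(ε) = min (ε/(2v)) (1/(2c))`. -/
theorem subgamma_implies_esi {Ω : Type*} [MeasurableSpace Ω]
    (P : Measure Ω) [IsProbabilityMeasure P]
    (X : Ω → ℝ) (hXm : Measurable X) (hX : Integrable X P)
    (c v : ℝ) (hc : 0 < c) (hv : 0 < v)
    (hsubgamma : ∀ η : ℝ, 0 < η → c * η < 1 →
      ∫⁻ ω, ENNReal.ofReal (Real.exp (η * (X ω - ∫ x, X x ∂P))) ∂P
        ≤ ENNReal.ofReal (Real.exp (v * η ^ 2 / (2 * (1 - c * η))))) :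
    ∀ ε : ℝ, 0 < ε →
      ∫⁻ ω, ENNReal.ofReal
          (Real.exp (min (ε / (2 * v)) (1 / (2 * c)) * (X ω - ∫ x, X x ∂P))) ∂P
        ≤ ENNReal.ofReal (Real.exp (min (ε / (2 * v)) (1 / (2 * c)) * ε)) := by
  intro ε hε
  set η : ℝ := min (ε / (2 * v)) (1 / (2 * c)) with hη_def
  have hηpos : 0 < η := lt_min (by positivity) (by positivity)
  have hη2 : η ≤ 1 / (2 * c) := min_le_right _ _
  have hη1 : η ≤ ε / (2 * v) := min_le_left _ _
  have hcη : c * η ≤ 1 / 2 := by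
    calc c * η ≤ c * (1 / (2 * c)) := by nlinarith
    _ = 1 / 2 := by field_simp
  have hcη1 : c * η < 1 := lt_of_le_of_lt hcη (by norm_num)
  refine (hsubgamma η hηpos hcη1).trans ?_
  apply ENNReal.ofReal_le_ofReal
  apply Real.exp_le_exp.mpr
  have hden : (1 : ℝ) ≤ 2 * (1 - c * η) := by linarith
  have h1 : v * η ^ 2 / (2 * (1 - c * η)) ≤ v * η ^ 2 := by
    apply div_le_self (by positivity) hden
  have hvη : η * (2 * v) ≤ ε := (le_div_iff₀ (by positivity)).mp hη1
  have h2 : v * η ^ 2 ≤ η * ε := by nlinarith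
  linarith
end

section
/- Fix γ ∈ [0,1] and adopt the convention η^{1/0} := 0. Let {X_f : f ∈ 𝓕} be a regular family of random variables, i.e. sup_{f∈𝓕} E[X_f²] < ∞. Then the following are equivalent: (i) there exist C* > 0 and η* > 0 such that for all f ∈ 𝓕 and all ε > 0, E[exp( (min(C*·ε^γ, η*))·X_f )] ≤ exp( (min(C*·ε^γ, η*))·ε ) (the family is γ-strong ESI); (ii) there exist C° > 0 and 0 < η° < 1 such that for all f ∈ 𝓕 and all η with 0 < η ≤ η°, E[exp( η·(X_f − C°·η^{1/γ}) )] ≤ 1. -/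
open MeasureTheory

private lemma esi_shift_key {Ω : Type*} [MeasurableSpace Ω] (P : Measure Ω)
    (X : Ω → ℝ) (η c : ℝ) :
    ∫⁻ ω, ENNReal.ofReal (Real.exp (η * (X ω - c))) ∂P
      = ENNReal.ofReal (Real.exp (-(η * c))) *
        ∫⁻ ω, ENNReal.ofReal (Real.exp (η * X ω)) ∂P := by
  rw [← lintegral_const_mul' _ _ ENNReal.ofReal_ne_top]
  congr 1
  funext ω
  rw [← ENNReal.ofReal_mul (Real.exp_nonneg _), ← Real.exp_add]
  congr 1
  ring

private lemma esi_shift {Ω : Type*} [MeasurableSpace Ω] (P : Measure Ω)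
    (X : Ω → ℝ) (η c : ℝ) :
    (∫⁻ ω, ENNReal.ofReal (Real.exp (η * (X ω - c))) ∂P ≤ 1) ↔
    (∫⁻ ω, ENNReal.ofReal (Real.exp (η * X ω)) ∂P
      ≤ ENNReal.ofReal (Real.exp (η * c))) := by
  rw [esi_shift_key, show (1 : ENNReal)
      = ENNReal.ofReal (Real.exp (-(η * c))) * ENNReal.ofReal (Real.exp (η * c)) by
    rw [← ENNReal.ofReal_mul (Real.exp_nonneg _), ← Real.exp_add]; simp]
  exact ENNReal.mul_le_mul_iff_right
    (ne_of_gt (ENNReal.ofReal_pos.mpr (Real.exp_pos _))) ENNReal.ofReal_ne_top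

/-- For a regular family, being a `γ`-strong ESI family is equivalent to the
`η`-indexed formulation with right-hand side `C° · η^(1/γ)` (convention `η^(1/0) = 0`). -/
theorem gamma_strong_esi_iff {Ω ι : Type*} [MeasurableSpace Ω]
    (P : Measure Ω) [IsProbabilityMeasure P]
    (γ : ℝ) (hγ0 : 0 ≤ γ) (hγ1 : γ ≤ 1)
    (X : ι → Ω → ℝ) (hXm : ∀ f, Measurable (X f))
    (hreg : ∃ M : ℝ, ∀ f, ∫⁻ ω, ENNReal.ofReal ((X f ω) ^ 2) ∂P ≤ ENNReal.ofReal M) :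
    (∃ Cstar : ℝ, 0 < Cstar ∧ ∃ ηstar : ℝ, 0 < ηstar ∧
        ∀ f, ∀ ε : ℝ, 0 < ε →
          ∫⁻ ω, ENNReal.ofReal (Real.exp (min (Cstar * ε ^ γ) ηstar * X f ω)) ∂P
            ≤ ENNReal.ofReal (Real.exp (min (Cstar * ε ^ γ) ηstar * ε))) ↔
    (∃ Ccirc : ℝ, 0 < Ccirc ∧ ∃ ηcirc : ℝ, 0 < ηcirc ∧ ηcirc < 1 ∧
        ∀ f, ∀ η : ℝ, 0 < η → η ≤ ηcirc →
          ∫⁻ ω, ENNReal.ofReal (Real.exp (η *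
            (X f ω - Ccirc * (if γ = 0 then 0 else η ^ (1 / γ))))) ∂P ≤ 1) := by
  constructor
  · rintro ⟨C, hC, ηs, hηs, h⟩
    by_cases hγ : γ = 0
    · -- γ = 0 case
      subst hγ
      simp only [Real.rpow_zero, mul_one] at h
      set η₀ : ℝ := min C ηs with hη₀def
      have hη₀ : 0 < η₀ := lt_min hC hηs
      -- take ε → 0 to get E[exp(η₀ X)] ≤ 1
      have hbase : ∀ f, ∫⁻ ω, ENNReal.ofReal (Real.exp (η₀ * X f ω)) ∂P ≤ 1 := by
        intro f
        have htend : Filter.Tendsto (fun ε : ℝ => ENNReal.ofReal (Real.exp (η₀ * ε)))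
            (nhdsWithin 0 (Set.Ioi 0)) (nhds 1) := by
          have hc : Filter.Tendsto (fun ε : ℝ => ENNReal.ofReal (Real.exp (η₀ * ε)))
              (nhds 0) (nhds (ENNReal.ofReal (Real.exp (η₀ * 0)))) :=
            (ENNReal.continuous_ofReal.comp
              (Real.continuous_exp.comp (continuous_const.mul continuous_id))).tendsto 0
          simpa using hc.mono_left nhdsWithin_le_nhds
        refine ge_of_tendsto htend ?_
        filter_upwards [self_mem_nhdsWithin] with ε (hε : 0 < ε)
        exact h f ε hε
      refine ⟨1, one_pos, min η₀ (1/2), lt_min hη₀ (by norm_num),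
        min_le_right _ _ |>.trans_lt (by norm_num), ?_⟩
      intro f η hη hηle
      simp only [↓reduceIte, mul_zero, sub_zero]
      have hηη₀ : η ≤ η₀ := hηle.trans (min_le_left _ _)
      set θ : ℝ := η / η₀ with hθdef
      have hθ0 : 0 ≤ θ := div_nonneg hη.le hη₀.le
      have hθ1 : θ ≤ 1 := (div_le_one hη₀).mpr hηη₀
      -- pointwise convexity bound
      have hpt : ∀ ω, Real.exp (η * X f ω)
          ≤ θ * Real.exp (η₀ * X f ω) + (1 - θ) := by
        intro ω
        have := convexOn_exp.2 (Set.mem_univ (η₀ * X f ω)) (Set.mem_univ (0 : ℝ))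
          hθ0 (by linarith : (0:ℝ) ≤ 1 - θ) (by ring)
        simp only [smul_eq_mul, mul_zero, add_zero, Real.exp_zero, mul_one] at this
        have harg : θ * (η₀ * X f ω) = η * X f ω := by
          rw [hθdef]
          field_simp
        rw [harg] at this
        linarith
      calc ∫⁻ ω, ENNReal.ofReal (Real.exp (η * X f ω)) ∂P
          ≤ ∫⁻ ω, (ENNReal.ofReal (θ * Real.exp (η₀ * X f ω))
              + ENNReal.ofReal (1 - θ)) ∂P := by
            refine lintegral_mono fun ω => ?_
            rw [← ENNReal.ofReal_add (by positivity) (by linarith)]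
            exact ENNReal.ofReal_le_ofReal (hpt ω)
        _ = ∫⁻ ω, ENNReal.ofReal θ * ENNReal.ofReal (Real.exp (η₀ * X f ω)) ∂P
              + ENNReal.ofReal (1 - θ) := by
            rw [lintegral_add_right _ measurable_const, lintegral_const,
              measure_univ, mul_one]
            congr 1
            refine lintegral_congr fun ω => ?_
            rw [← ENNReal.ofReal_mul hθ0]
        _ ≤ ENNReal.ofReal θ * 1 + ENNReal.ofReal (1 - θ) := by
            rw [lintegral_const_mul' _ _ ENNReal.ofReal_ne_top]
            exact add_le_add_left (mul_le_mul_right (hbase f) _) _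
        _ = 1 := by
            rw [mul_one, ← ENNReal.ofReal_add hθ0 (by linarith)]
            norm_num
    · -- γ > 0 case
      have hγpos : 0 < γ := lt_of_le_of_ne hγ0 (Ne.symm hγ)
      refine ⟨(1/C) ^ (1/γ), Real.rpow_pos_of_pos (by positivity) _,
        min ηs (1/2), lt_min hηs (by norm_num),
        min_le_right _ _ |>.trans_lt (by norm_num), ?_⟩
      intro f η hη hηle
      rw [if_neg hγ]
      set ε : ℝ := (η / C) ^ (1/γ) with hεdef
      have hε : 0 < ε := Real.rpow_pos_of_pos (by positivity) _
      have hmin : min (C * ε ^ γ) ηs = η := by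
        have : C * ε ^ γ = η := by
          rw [hεdef, one_div, Real.rpow_inv_rpow (by positivity) hγ]
          field_simp
        rw [this]
        exact min_eq_left (hηle.trans (min_le_left _ _))
      have hεeq : (1/C) ^ (1/γ) * η ^ (1/γ) = ε := by
        rw [hεdef, ← Real.mul_rpow (by positivity) hη.le, one_div_mul_eq_div]
      have := h f ε hε
      rw [hmin] at this
      rw [esi_shift, hεeq]
      exact this
  · rintro ⟨C, hC, ηc, hηc, hηc1, h⟩
    by_cases hγ : γ = 0
    · subst hγ
      refine ⟨ηc, hηc, ηc, hηc, fun f ε hε => ?_⟩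
      simp only [Real.rpow_zero, mul_one, min_self]
      have := h f ηc hηc le_rfl
      simp only [↓reduceIte, mul_zero, sub_zero] at this
      exact this.trans (by
        rw [show (1 : ENNReal) = ENNReal.ofReal (Real.exp 0) by simp]
        exact ENNReal.ofReal_le_ofReal (Real.exp_le_exp.mpr (by positivity)))
    · have hγpos : 0 < γ := lt_of_le_of_ne hγ0 (Ne.symm hγ)
      refine ⟨(1/C) ^ γ, Real.rpow_pos_of_pos (by positivity) _, ηc, hηc, ?_⟩
      intro f ε hε
      set u : ℝ := min ((1/C) ^ γ * ε ^ γ) ηc with hudef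
      have hu : 0 < u := lt_min (by positivity) hηc
      have huηc : u ≤ ηc := min_le_right _ _
      have hkey := h f u hu huηc
      rw [if_neg hγ, esi_shift] at hkey
      refine hkey.trans (ENNReal.ofReal_le_ofReal (Real.exp_le_exp.mpr ?_))
      have hcu : C * u ^ (1/γ) ≤ ε := by
        have h1 : u ^ (1/γ) ≤ ((1/C) ^ γ * ε ^ γ) ^ (1/γ) :=
          Real.rpow_le_rpow hu.le (min_le_left _ _) (by positivity)
        have h2 : ((1/C) ^ γ * ε ^ γ) ^ (1/γ) = (1/C) * ε := by
          rw [Real.mul_rpow (by positivity) (by positivity), one_div γ,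
            Real.rpow_rpow_inv (by positivity) hγ, Real.rpow_rpow_inv hε.le hγ]
        have h3 : u ^ (1/γ) ≤ (1/C) * ε := h2 ▸ h1
        calc C * u ^ (1/γ) ≤ C * ((1/C) * ε) :=
              mul_le_mul_of_nonneg_left h3 hC.le
          _ = ε := by field_simp
      exact mul_le_mul_of_nonneg_left hcu hu.le
end

section
/- (Bernstein direction of the Bernstein/central-condition equivalence.) Let {X_f : f ∈ 𝓕} be a family of random variables, each with finite second moment. Suppose there exist β ∈ (0,1), η° > 0 and C° > 0 such that for all f ∈ 𝓕 and all η with 0 < η ≤ η°, E[exp( η·(X_f − C°·η^{1/(1−β)}) )] ≤ 1. Suppose furthermore that there exist C > 0 and η₁ > 0 such that for all f ∈ 𝓕 and all η with 0 < η ≤ η₁, E[X_f²] ≤ C·E[X_f²·exp(η·X_f)]. Then the family {−X_f : f ∈ 𝓕} satisfies the β-Bernstein condition: for all f ∈ 𝓕, E[−X_f] ≥ 0, and there exists B > 0 such that for all f ∈ 𝓕, E[X_f²] ≤ B·(E[−X_f])^β. -/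
open MeasureTheory

section Aux

lemma sq_le_sinh_sq' (t : ℝ) : t ^ 2 ≤ (Real.sinh t) ^ 2 := by
  rcases le_or_gt 0 t with h | h
  · have h1 : t ≤ Real.sinh t := Real.self_le_sinh_iff.2 h
    nlinarith
  · have h1 : Real.sinh t ≤ t := Real.sinh_le_self_iff.2 h.le
    nlinarith

lemma key_ineq' (z : ℝ) : z ^ 2 * Real.exp z ≤ Real.exp (2 * z) - 1 - 2 * z := by
  set u := Real.exp (z / 2) with hu
  have hupos : 0 < u := Real.exp_pos _
  have h2 : Real.exp z = u ^ 2 := by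
    rw [hu, sq, ← Real.exp_add]; ring_nf
  have h4 : Real.exp (2 * z) = u ^ 4 := by
    have : Real.exp (2 * z) = Real.exp z * Real.exp z := by rw [← Real.exp_add]; ring_nf
    rw [this, h2]; ring
  have hsinh : u - u⁻¹ = 2 * Real.sinh (z / 2) := by
    rw [Real.sinh_eq, ← Real.exp_neg, hu]; ring_nf
  have habs : (z / 2) ^ 2 ≤ (Real.sinh (z / 2)) ^ 2 := sq_le_sinh_sq' _
  have hz2 : z ^ 2 ≤ (u - u⁻¹) ^ 2 := by
    rw [hsinh]; nlinarith
  have hkey : z ^ 2 * u ^ 2 ≤ (u ^ 2 - 1) ^ 2 := by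
    have hne : u ≠ 0 := hupos.ne'
    have : (u - u⁻¹) ^ 2 * u ^ 2 = (u ^ 2 - 1) ^ 2 := by field_simp
    nlinarith [sq_nonneg u, mul_le_mul_of_nonneg_right hz2 (sq_nonneg u)]
  have hlin : z + 1 ≤ u ^ 2 := by rw [← h2]; exact Real.add_one_le_exp z
  rw [h2, h4]; nlinarith

variable {Ω : Type*} [MeasurableSpace Ω]

lemma integrable_of_lintegral_ne_top' {P : Measure Ω} {g : Ω → ℝ}
    (hg : Measurable g) (h0 : ∀ ω, 0 ≤ g ω)
    (h : ∫⁻ ω, ENNReal.ofReal (g ω) ∂P ≠ ⊤) : Integrable g P := by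
  refine ⟨hg.aestronglyMeasurable, ?_⟩
  rw [hasFiniteIntegral_iff_ofReal (Filter.Eventually.of_forall h0)]
  exact lt_top_iff_ne_top.2 h

lemma integral_le_of_lintegral_le' {P : Measure Ω} {g : Ω → ℝ} {c : ℝ}
    (hg : Measurable g) (h0 : ∀ ω, 0 ≤ g ω) (hc : 0 ≤ c)
    (h : ∫⁻ ω, ENNReal.ofReal (g ω) ∂P ≤ ENNReal.ofReal c) :
    Integrable g P ∧ ∫ ω, g ω ∂P ≤ c := by
  have hint : Integrable g P :=
    integrable_of_lintegral_ne_top' hg h0 (ne_top_of_le_ne_top ENNReal.ofReal_ne_top h)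
  refine ⟨hint, ?_⟩
  rw [← ofReal_integral_eq_lintegral_ofReal hint (Filter.Eventually.of_forall h0)] at h
  exact (ENNReal.ofReal_le_ofReal_iff hc).mp h

lemma exp_moment' {P : Measure Ω} {Y : Ω → ℝ} (hY : Measurable Y)
    {η c : ℝ}
    (h : ∫⁻ ω, ENNReal.ofReal (Real.exp (η * (Y ω - c))) ∂P ≤ 1) :
    Integrable (fun ω => Real.exp (η * Y ω)) P ∧
      ∫ ω, Real.exp (η * Y ω) ∂P ≤ Real.exp (η * c) := by
  have key : ∫⁻ ω, ENNReal.ofReal (Real.exp (η * Y ω)) ∂P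
      ≤ ENNReal.ofReal (Real.exp (η * c)) := by
    calc ∫⁻ ω, ENNReal.ofReal (Real.exp (η * Y ω)) ∂P
        = ∫⁻ ω, ENNReal.ofReal (Real.exp (η * (Y ω - c)))
            * ENNReal.ofReal (Real.exp (η * c)) ∂P := by
          congr 1; funext ω
          rw [← ENNReal.ofReal_mul (Real.exp_nonneg _), ← Real.exp_add]
          ring_nf
      _ = (∫⁻ ω, ENNReal.ofReal (Real.exp (η * (Y ω - c))) ∂P)
            * ENNReal.ofReal (Real.exp (η * c)) :=
          lintegral_mul_const' _ _ ENNReal.ofReal_ne_top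
      _ ≤ 1 * ENNReal.ofReal (Real.exp (η * c)) := mul_le_mul_left h _
      _ = ENNReal.ofReal (Real.exp (η * c)) := one_mul _
  exact integral_le_of_lintegral_le'
    (Real.measurable_exp.comp (measurable_const.mul hY))
    (fun ω => (Real.exp_pos _).le) (Real.exp_pos _).le key

lemma mean_le' {P : Measure Ω} [IsProbabilityMeasure P] {Y : Ω → ℝ}
    (hY : Measurable Y) (hYint : Integrable Y P) {η c : ℝ} (hη : 0 < η)
    (h : ∫⁻ ω, ENNReal.ofReal (Real.exp (η * (Y ω - c))) ∂P ≤ 1) :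
    ∫ ω, Y ω ∂P ≤ c := by
  have h1 : (1 : ENNReal) = ENNReal.ofReal (1 : ℝ) := by simp
  obtain ⟨hint, hle⟩ := integral_le_of_lintegral_le'
    (Real.measurable_exp.comp (measurable_const.mul (hY.sub measurable_const)))
    (fun ω => (Real.exp_pos _).le) one_pos.le (h1 ▸ h)
  have hpt : ∀ ω, 1 + η * (Y ω - c) ≤ Real.exp (η * (Y ω - c)) := fun ω => by
    have := Real.add_one_le_exp (η * (Y ω - c)); linarith
  have hint2 : Integrable (fun ω => 1 + η * (Y ω - c)) P :=
    (integrable_const 1).add ((hYint.sub (integrable_const c)).const_mul η)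
  have hmono := integral_mono hint2 hint hpt
  have i1 : Integrable (fun ω => η * (Y ω - c)) P :=
    (hYint.sub (integrable_const c)).const_mul η
  rw [integral_add (integrable_const 1) i1, integral_const_mul,
    integral_sub hYint (integrable_const c), integral_const] at hmono
  simp only [Function.comp, Pi.mul_apply, Pi.sub_apply] at hmono hle
  simp at hmono
  nlinarith [hmono, hle]

lemma endgame' (β η₀ D E astar : ℝ) (hβ0 : 0 < β) (hβ1 : β < 1) (hη₀ : 0 < η₀)
    (hD : 0 < D) (hastar : 0 < astar) (m a : ℝ) (ha0 : 0 ≤ a)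
    (ha : a ≤ astar)
    (hm : ∀ η : ℝ, 0 < η → η ≤ η₀ → m ≤ D * η ^ (β / (1 - β)) + E * a / η) :
    m ≤ (D * η₀ ^ (β / (1 - β)) / astar ^ β + E * astar ^ (1 - β) / η₀) * a ^ β := by
  have h1β : 0 < 1 - β := by linarith
  rcases eq_or_lt_of_le ha0 with rfl | hapos
  · rw [Real.zero_rpow hβ0.ne', mul_zero]
    by_contra hcon
    push_neg at hcon
    set η := min η₀ ((m / (2 * D)) ^ ((1 - β) / β)) with hηdef
    have hx : 0 < m / (2 * D) := by positivity
    have hηpos : 0 < η := lt_min hη₀ (Real.rpow_pos_of_pos hx _)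
    have h2 := hm η hηpos (min_le_left _ _)
    have h3 : η ^ (β / (1 - β)) ≤ m / (2 * D) := by
      calc η ^ (β / (1 - β))
          ≤ ((m / (2 * D)) ^ ((1 - β) / β)) ^ (β / (1 - β)) :=
            Real.rpow_le_rpow hηpos.le (min_le_right _ _) (by positivity)
        _ = (m / (2 * D)) ^ (((1 - β) / β) * (β / (1 - β))) := by
            rw [← Real.rpow_mul hx.le]
        _ = m / (2 * D) := by
            rw [show ((1 - β) / β) * (β / (1 - β)) = 1 by field_simp, Real.rpow_one]
    have h4 : E * 0 / η = 0 := by ring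
    rw [h4] at h2
    have h5 : D * η ^ (β / (1 - β)) ≤ m / 2 := by
      calc D * η ^ (β / (1 - β)) ≤ D * (m / (2 * D)) := by nlinarith
        _ = m / 2 := by field_simp
    linarith
  · set η := η₀ * (a / astar) ^ (1 - β) with hηdef
    have hfrac : 0 < a / astar := by positivity
    have hfrac1 : a / astar ≤ 1 := (div_le_one hastar).2 ha
    have hrp : 0 < (a / astar) ^ (1 - β) := Real.rpow_pos_of_pos hfrac _
    have hηpos : 0 < η := by positivity
    have hηle : η ≤ η₀ := by
      have h1 : (a / astar) ^ (1 - β) ≤ 1 := Real.rpow_le_one hfrac.le hfrac1 h1β.le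
      nlinarith
    have h2 := hm η hηpos hηle
    have e1 : η ^ (β / (1 - β)) = η₀ ^ (β / (1 - β)) * (a ^ β / astar ^ β) := by
      rw [hηdef, Real.mul_rpow hη₀.le hrp.le]
      congr 1
      rw [← Real.rpow_mul hfrac.le, show (1 - β) * (β / (1 - β)) = β by field_simp,
        Real.div_rpow ha0 hastar.le]
    have e2 : E * a / η = E * (a ^ β * astar ^ (1 - β) / η₀) := by
      have hk : a ^ (β : ℝ) * a ^ (1 - β) = a := by
        rw [← Real.rpow_add hapos, show β + (1 - β) = 1 by ring, Real.rpow_one]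
      have hb1 : 0 < a ^ (β : ℝ) := Real.rpow_pos_of_pos hapos _
      have hb2 : 0 < a ^ (1 - β) := Real.rpow_pos_of_pos hapos _
      have hb3 : 0 < astar ^ (1 - β) := Real.rpow_pos_of_pos hastar _
      rw [hηdef, Real.div_rpow ha0 hastar.le]
      field_simp
      linear_combination -E * hk
    rw [e1, e2] at h2
    have expand : (D * η₀ ^ (β / (1 - β)) / astar ^ β + E * astar ^ (1 - β) / η₀) * a ^ β
        = D * (η₀ ^ (β / (1 - β)) * (a ^ β / astar ^ β))
          + E * (a ^ β * astar ^ (1 - β) / η₀) := by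
      ring
    linarith [h2, expand.ge]

lemma abound' (K₁ K₂ a m : ℝ) (hK₁ : 0 < K₁) (h1 : 1 < a) (h2 : a ^ 2 ≤ m)
    (h3 : m ≤ K₁ + K₂ * a) : a ≤ K₁ + K₂ := by nlinarith

end Aux

/-- Bernstein direction of the Bernstein/central-condition equivalence: a `(b,1]`-strong
ESI family satisfying the witness-type second-moment condition is a Bernstein family. -/
theorem strong_esi_implies_bernstein {Ω ι : Type*} [MeasurableSpace Ω]
    (P : Measure Ω) [IsProbabilityMeasure P]
    (X : ι → Ω → ℝ) (hXm : ∀ f, Measurable (X f)) (hX2 : ∀ f, MemLp (X f) 2 P)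
    (β : ℝ) (hβ0 : 0 < β) (hβ1 : β < 1)
    (ηcirc Ccirc : ℝ) (hηcirc : 0 < ηcirc) (hCcirc : 0 < Ccirc)
    (hESI : ∀ f, ∀ η : ℝ, 0 < η → η ≤ ηcirc →
      ∫⁻ ω, ENNReal.ofReal
        (Real.exp (η * (X f ω - Ccirc * η ^ (1 / (1 - β))))) ∂P ≤ 1)
    (C η₁ : ℝ) (hC : 0 < C) (hη₁ : 0 < η₁)
    (hwitness : ∀ f, ∀ η : ℝ, 0 < η → η ≤ η₁ →
      ∫⁻ ω, ENNReal.ofReal ((X f ω) ^ 2) ∂P ≤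
        ENNReal.ofReal C * ∫⁻ ω, ENNReal.ofReal ((X f ω) ^ 2 * Real.exp (η * X f ω)) ∂P) :
    (∀ f, 0 ≤ ∫ ω, -X f ω ∂P) ∧
      ∃ B : ℝ, 0 < B ∧ ∀ f,
        ∫ ω, (X f ω) ^ 2 ∂P ≤ B * (∫ ω, -X f ω ∂P) ^ β := by
  have h1β : 0 < 1 - β := by linarith
  set γ : ℝ := 1 + 1 / (1 - β) with hγ
  have hγpos : 0 < γ := by positivity
  have hXint : ∀ f, Integrable (X f) P := fun f => (hX2 f).integrable one_le_two
  have hX2int : ∀ f, Integrable (fun ω => X f ω ^ 2) P := fun f => (hX2 f).integrable_sq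
  -- Part 1 : the mean is nonpositive
  have hEXle : ∀ f, ∀ η : ℝ, 0 < η → η ≤ ηcirc →
      ∫ ω, X f ω ∂P ≤ Ccirc * η ^ (1 / (1 - β)) :=
    fun f η hη hηc => mean_le' (hXm f) (hXint f) hη (hESI f η hη hηc)
  have hEX : ∀ f, ∫ ω, X f ω ∂P ≤ 0 := by
    intro f
    by_contra hcon
    push_neg at hcon
    set x := (∫ ω, X f ω ∂P) / (2 * Ccirc) with hxdef
    have hxpos : 0 < x := by positivity
    set η := min ηcirc (x ^ (1 - β)) with hηdef
    have hηpos : 0 < η := lt_min hηcirc (Real.rpow_pos_of_pos hxpos _)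
    have h2 := hEXle f η hηpos (min_le_left _ _)
    have h3 : η ^ (1 / (1 - β)) ≤ x := by
      calc η ^ (1 / (1 - β))
          ≤ (x ^ (1 - β)) ^ (1 / (1 - β)) :=
            Real.rpow_le_rpow hηpos.le (min_le_right _ _) (by positivity)
        _ = x ^ ((1 - β) * (1 / (1 - β))) := by rw [← Real.rpow_mul hxpos.le]
        _ = x := by
            rw [show (1 - β) * (1 / (1 - β)) = 1 by field_simp, Real.rpow_one]
    have h4 : Ccirc * η ^ (1 / (1 - β)) ≤ (∫ ω, X f ω ∂P) / 2 := by
      calc Ccirc * η ^ (1 / (1 - β)) ≤ Ccirc * x := by nlinarith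
        _ = (∫ ω, X f ω ∂P) / 2 := by rw [hxdef]; field_simp
    linarith
  have part1 : ∀ f, 0 ≤ ∫ ω, -X f ω ∂P := by
    intro f; rw [integral_neg]; linarith [hEX f]
  refine ⟨part1, ?_⟩
  -- exponential moment bound
  have hB : ∀ f, ∀ η : ℝ, 0 < η → η ≤ ηcirc →
      Integrable (fun ω => Real.exp (η * X f ω)) P ∧
        ∫ ω, Real.exp (η * X f ω) ∂P ≤ Real.exp (Ccirc * η ^ γ) := by
    intro f η hη hηc
    obtain ⟨hint, hle⟩ := exp_moment' (hXm f) (hESI f η hη hηc)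
    refine ⟨hint, hle.trans_eq ?_⟩
    rw [hγ, Real.rpow_add hη, Real.rpow_one]
    ring
  set η₀ : ℝ := min η₁ (ηcirc / 2) with hη₀def
  have hη₀ : 0 < η₀ := lt_min hη₁ (by positivity)
  obtain ⟨K, hK, hKdef⟩ : ∃ k : ℝ, 0 < k ∧ k = Ccirc * 2 ^ γ * Real.exp (Ccirc * ηcirc ^ γ) :=
    ⟨_, by positivity, rfl⟩
  -- the key inequality for every small η
  have hstar : ∀ f, ∀ η : ℝ, 0 < η → η ≤ η₀ →
      (∫ ω, X f ω ^ 2 ∂P) ≤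
        C * K * η ^ (β / (1 - β)) + 2 * C * (∫ ω, -X f ω ∂P) / η := by
    intro f η hη hηle
    have hη1 : η ≤ η₁ := hηle.trans (min_le_left _ _)
    have h2η : 0 < 2 * η := by linarith
    have h2ηc : 2 * η ≤ ηcirc := by
      have := hηle.trans (min_le_right _ _); linarith
    obtain ⟨hGint, hGle⟩ := hB f (2 * η) h2η h2ηc
    set G : ℝ := ∫ ω, Real.exp (2 * η * X f ω) ∂P with hGdef
    set a : ℝ := ∫ ω, -X f ω ∂P with hadef
    have hEXa : ∫ ω, X f ω ∂P = -a := by rw [hadef, integral_neg]; ring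
    have ha0 : 0 ≤ a := part1 f
    -- pointwise bound
    have hpt : ∀ ω, X f ω ^ 2 * Real.exp (η * X f ω) ≤
        (Real.exp (2 * η * X f ω) - 1 - 2 * η * X f ω) / η ^ 2 := by
      intro ω
      have hk := key_ineq' (η * X f ω)
      rw [le_div_iff₀ (by positivity)]
      calc X f ω ^ 2 * Real.exp (η * X f ω) * η ^ 2
          = (η * X f ω) ^ 2 * Real.exp (η * X f ω) := by ring
        _ ≤ Real.exp (2 * (η * X f ω)) - 1 - 2 * (η * X f ω) := hk
        _ = Real.exp (2 * η * X f ω) - 1 - 2 * η * X f ω := by ring_nf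
    have i2 : Integrable (fun ω => 2 * η * X f ω) P := (hXint f).const_mul (2 * η)
    have hgint : Integrable
        (fun ω => (Real.exp (2 * η * X f ω) - 1 - 2 * η * X f ω) / η ^ 2) P :=
      (((hGint.sub (integrable_const 1)).sub i2).div_const _)
    have hmeas : Measurable (fun ω => X f ω ^ 2 * Real.exp (η * X f ω)) :=
      ((hXm f).pow_const 2).mul (Real.measurable_exp.comp (measurable_const.mul (hXm f)))
    have hhint : Integrable (fun ω => X f ω ^ 2 * Real.exp (η * X f ω)) P := by
      apply Integrable.mono' hgint hmeas.aestronglyMeasurable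
      apply Filter.Eventually.of_forall
      intro ω
      rw [Real.norm_eq_abs, abs_of_nonneg (by positivity)]
      exact hpt ω
    have hIle : ∫ ω, X f ω ^ 2 * Real.exp (η * X f ω) ∂P ≤
        (G - 1 + 2 * η * a) / η ^ 2 := by
      have hmono := integral_mono hhint hgint hpt
      have iG1 : Integrable (fun ω => Real.exp (2 * η * X f ω) - 1) P :=
        hGint.sub (integrable_const 1)
      have hsplit : ∫ ω, (Real.exp (2 * η * X f ω) - 1 - 2 * η * X f ω) / η ^ 2 ∂P
          = (G - 1 + 2 * η * a) / η ^ 2 := by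
        rw [integral_div, integral_sub iG1 i2,
          integral_sub hGint (integrable_const 1), integral_const_mul, integral_const,
          hEXa, ← hGdef]
        simp
      rw [hsplit] at hmono
      exact hmono
    -- witness condition in real form
    have hhnn : ∀ ω, 0 ≤ X f ω ^ 2 * Real.exp (η * X f ω) := fun ω => by positivity
    have hm2 : ∫ ω, X f ω ^ 2 ∂P ≤ C * ∫ ω, X f ω ^ 2 * Real.exp (η * X f ω) ∂P := by
      have hw := hwitness f η hη hη1
      rw [← ofReal_integral_eq_lintegral_ofReal (hX2int f)
          (Filter.Eventually.of_forall fun ω => sq_nonneg _),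
        ← ofReal_integral_eq_lintegral_ofReal hhint
          (Filter.Eventually.of_forall hhnn),
        ← ENNReal.ofReal_mul hC.le] at hw
      exact (ENNReal.ofReal_le_ofReal_iff
        (mul_nonneg hC.le (integral_nonneg hhnn))).mp hw
    -- bound G - 1
    have hGm1 : G - 1 ≤ K * η ^ γ := by
      have hrw : (2 * η) ^ γ ≤ ηcirc ^ γ := Real.rpow_le_rpow h2η.le h2ηc hγpos.le
      have hT : Ccirc * (2 * η) ^ γ ≤ Ccirc * ηcirc ^ γ := by nlinarith
      have hexp : Real.exp (Ccirc * (2 * η) ^ γ) - 1 ≤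
          (Ccirc * (2 * η) ^ γ) * Real.exp (Ccirc * (2 * η) ^ γ) := by
        have h5 := Real.add_one_le_exp (-(Ccirc * (2 * η) ^ γ))
        have h7 : Real.exp (-(Ccirc * (2 * η) ^ γ)) * Real.exp (Ccirc * (2 * η) ^ γ) = 1 := by
          rw [← Real.exp_add]; simp
        have h8 := mul_le_mul_of_nonneg_right h5 (Real.exp_pos (Ccirc * (2 * η) ^ γ)).le
        rw [h7] at h8
        nlinarith [h8]
      have h2γ : (2 * η) ^ γ = 2 ^ γ * η ^ γ := Real.mul_rpow (by norm_num) hη.le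
      have hrp0 : (0:ℝ) ≤ (2 * η) ^ γ := Real.rpow_nonneg h2η.le _
      calc G - 1 ≤ Real.exp (Ccirc * (2 * η) ^ γ) - 1 := by linarith
        _ ≤ (Ccirc * (2 * η) ^ γ) * Real.exp (Ccirc * (2 * η) ^ γ) := hexp
        _ ≤ (Ccirc * (2 * η) ^ γ) * Real.exp (Ccirc * ηcirc ^ γ) := by
            apply mul_le_mul_of_nonneg_left (Real.exp_le_exp.2 hT) (by positivity)
        _ = K * η ^ γ := by rw [h2γ, hKdef]; ring
    -- put everything together
    have hγ2 : η ^ γ = η ^ (β / (1 - β)) * η ^ 2 := by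
      have hγeq : γ = β / (1 - β) + 2 := by rw [hγ]; field_simp; ring
      rw [hγeq, Real.rpow_add hη, show ((2:ℝ) = ((2:ℕ):ℝ)) by norm_num,
        Real.rpow_natCast]
    have e : C * ((K * η ^ γ + 2 * η * a) / η ^ 2)
        = C * K * η ^ (β / (1 - β)) + 2 * C * a / η := by
      rw [hγ2]; field_simp
    calc ∫ ω, X f ω ^ 2 ∂P
        ≤ C * ∫ ω, X f ω ^ 2 * Real.exp (η * X f ω) ∂P := hm2
      _ ≤ C * ((G - 1 + 2 * η * a) / η ^ 2) := mul_le_mul_of_nonneg_left hIle hC.le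
      _ ≤ C * ((K * η ^ γ + 2 * η * a) / η ^ 2) := by
          apply mul_le_mul_of_nonneg_left _ hC.le
          apply (div_le_div_iff_of_pos_right (by positivity)).2
          linarith
      _ = C * K * η ^ (β / (1 - β)) + 2 * C * a / η := e
  -- uniform bound on a
  obtain ⟨K₁, hK₁, hK₁def⟩ : ∃ k : ℝ, 0 < k ∧ k = C * K * η₀ ^ (β / (1 - β)) :=
    ⟨_, by positivity, rfl⟩
  obtain ⟨K₂, hK₂, hK₂def⟩ : ∃ k : ℝ, 0 < k ∧ k = 2 * C / η₀ :=
    ⟨_, by positivity, rfl⟩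
  obtain ⟨astar, hastar, hamax1, hamax2⟩ :
      ∃ s : ℝ, 0 < s ∧ 1 ≤ s ∧ K₁ + K₂ ≤ s :=
    ⟨max 1 (K₁ + K₂), lt_of_lt_of_le one_pos (le_max_left _ _), le_max_left _ _,
      le_max_right _ _⟩
  have haue : ∀ f, (∫ ω, -X f ω ∂P) ≤ astar := by
    intro f
    set a : ℝ := ∫ ω, -X f ω ∂P with hadef
    have ha0 : 0 ≤ a := part1 f
    have hEXa : ∫ ω, X f ω ∂P = -a := by rw [hadef, integral_neg]; ring
    -- a² ≤ m₂
    have hvar : a ^ 2 ≤ ∫ ω, X f ω ^ 2 ∂P := by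
      have i3 : Integrable (fun ω => 2 * a * X f ω + a ^ 2) P :=
        ((hXint f).const_mul (2 * a)).add (integrable_const _)
      have hexp : ∫ ω, (X f ω + a) ^ 2 ∂P
          = (∫ ω, X f ω ^ 2 ∂P) + (2 * a * (∫ ω, X f ω ∂P) + a ^ 2) := by
        have hcongr : ∫ ω, (X f ω + a) ^ 2 ∂P
            = ∫ ω, (X f ω ^ 2 + (2 * a * X f ω + a ^ 2)) ∂P := by
          congr 1; funext ω; ring
        rw [hcongr, integral_add (hX2int f) i3,
          integral_add ((hXint f).const_mul (2 * a)) (integrable_const _),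
          integral_const_mul, integral_const]
        simp
      have hnn : 0 ≤ ∫ ω, (X f ω + a) ^ 2 ∂P :=
        integral_nonneg fun ω => sq_nonneg _
      rw [hexp, hEXa] at hnn
      nlinarith
    have hm2le : ∫ ω, X f ω ^ 2 ∂P ≤ K₁ + K₂ * a := by
      have := hstar f η₀ hη₀ le_rfl
      rw [← hadef] at this
      calc ∫ ω, X f ω ^ 2 ∂P ≤ C * K * η₀ ^ (β / (1 - β)) + 2 * C * a / η₀ := this
        _ = K₁ + K₂ * a := by rw [hK₁def, hK₂def]; ring
    rcases le_or_gt a 1 with h | h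
    · exact h.trans hamax1
    · exact (abound' K₁ K₂ a _ hK₁ h hvar hm2le).trans hamax2
  -- conclude via the endgame lemma
  have hBpos : 0 < (C * K) * η₀ ^ (β / (1 - β)) / astar ^ β + (2 * C) * astar ^ (1 - β) / η₀ := by
    have p1 : 0 < (C * K) * η₀ ^ (β / (1 - β)) / astar ^ β :=
      div_pos (mul_pos (mul_pos hC hK) (Real.rpow_pos_of_pos hη₀ _))
        (Real.rpow_pos_of_pos hastar _)
    have p2 : 0 < (2 * C) * astar ^ (1 - β) / η₀ :=
      div_pos (mul_pos (by linarith) (Real.rpow_pos_of_pos hastar _)) hη₀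
    linarith
  refine ⟨(C * K) * η₀ ^ (β / (1 - β)) / astar ^ β + (2 * C) * astar ^ (1 - β) / η₀,
    hBpos, ?_⟩
  intro f
  exact endgame' β η₀ (C * K) (2 * C) astar hβ0 hβ1 hη₀ (by positivity) hastar
    (∫ ω, X f ω ^ 2 ∂P) (∫ ω, -X f ω ∂P) (part1 f) (haue f)
    (fun η hη hηle => hstar f η hη hηle)
end

section
/- (PAC-Bayes, Donsker–Varadhan form.) Let (Ω, 𝓐, P) be a probability space, (F, 𝓑) a measurable space, X : F × Ω → ℝ jointly measurable, η > 0, Π₀ a probability measure on F, and ω ↦ Π̂(ω) a Markov kernel from Ω to F such that Π̂(ω) and Π₀ are mutually absolutely continuous for every ω. Assume A := (1/η)·log ∫∫ exp(η·X(f,ω)) dΠ₀(f) dP(ω) is finite. Then E_{ω∼P}[ exp( η·( ∫ X(f,ω) dΠ̂(ω)(f) − A ) − KL(Π̂(ω) ‖ Π₀) ) ] ≤ 1. -/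
open MeasureTheory ProbabilityTheory

/-- Donsker–Varadhan pointwise inequality for a fixed posterior. -/
lemma dv_pointwise {F : Type*} [MeasurableSpace F]
    (Q₀ μ : Measure F) [IsProbabilityMeasure Q₀] [IsProbabilityMeasure μ]
    (hac : μ ≪ Q₀) (hac' : Q₀ ≪ μ) (Y : F → ℝ)
    (hexp : Integrable (fun f => Real.exp (Y f)) Q₀)
    (hYint : Integrable Y μ)
    (hKL : Integrable (fun f => Real.log (μ.rnDeriv Q₀ f).toReal) μ) :
    Real.exp ((∫ f, Y f ∂μ) - ∫ f, Real.log (μ.rnDeriv Q₀ f).toReal ∂μ)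
      ≤ ∫ f, Real.exp (Y f) ∂Q₀ := by
  set gr : F → ℝ := fun f => (μ.rnDeriv Q₀ f).toReal with hgr
  set G : F → ℝ := fun f => Y f - Real.log (gr f) with hG
  set h : F → ℝ := fun f => Real.exp (Y f) * (gr f)⁻¹ with hh
  have hposμ : ∀ᵐ f ∂μ, 0 < gr f := by
    filter_upwards [Measure.rnDeriv_pos hac,
      hac.ae_le (Measure.rnDeriv_lt_top μ Q₀)] with f h1 h2
    exact ENNReal.toReal_pos h1.ne' h2.ne
  have hposQ : ∀ᵐ f ∂Q₀, 0 < gr f := hac'.ae_le hposμ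
  -- `gr • h = exp ∘ Y` a.e. `Q₀`
  have hsmul : (fun f => gr f • h f) =ᵐ[Q₀] fun f => Real.exp (Y f) := by
    filter_upwards [hposQ] with f hf
    simp only [hh, smul_eq_mul]
    rw [mul_comm, mul_assoc, inv_mul_cancel₀ hf.ne', mul_one]
  have hhμ : Integrable h μ := by
    rw [← integrable_rnDeriv_smul_iff (f := h) hac]
    exact hexp.congr hsmul.symm
  -- `exp ∘ G = h` a.e. `μ`
  have hGh : (fun f => Real.exp (G f)) =ᵐ[μ] h := by
    filter_upwards [hposμ] with f hf
    rw [hG, hh, Real.exp_sub, Real.exp_log hf]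
    ring
  have hGint : Integrable G μ := hYint.sub hKL
  have hexpG : Integrable (fun f => Real.exp (G f)) μ := hhμ.congr hGh.symm
  have hjensen : Real.exp (∫ f, G f ∂μ) ≤ ∫ f, Real.exp (G f) ∂μ := by
    have := convexOn_exp.map_integral_le (μ := μ) (f := G)
      Real.continuous_exp.continuousOn isClosed_univ
      (Filter.Eventually.of_forall fun _ => trivial) hGint ?_
    · exact this
    · exact hexpG
  have hGeq : ∫ f, G f ∂μ = (∫ f, Y f ∂μ) - ∫ f, Real.log (gr f) ∂μ :=
    integral_sub hYint hKL
  have hint_eq : ∫ f, Real.exp (G f) ∂μ = ∫ f, Real.exp (Y f) ∂Q₀ := by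
    rw [integral_congr_ae hGh, ← integral_rnDeriv_smul hac (f := h),
      integral_congr_ae hsmul]
  calc Real.exp ((∫ f, Y f ∂μ) - ∫ f, Real.log (gr f) ∂μ)
      = Real.exp (∫ f, G f ∂μ) := by rw [hGeq]
    _ ≤ ∫ f, Real.exp (G f) ∂μ := hjensen
    _ = ∫ f, Real.exp (Y f) ∂Q₀ := hint_eq

/-- PAC-Bayes in Donsker–Varadhan form: `E_Π̂[X] - A ⊴_η KL(Π̂‖Π₀)/η`, stated as a
single exponential-moment inequality. Here `Q₀` is the prior `Π₀` and `Qhat` the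
posterior kernel `Π̂`. -/
theorem pac_bayes_donsker_varadhan {Ω F : Type*} [MeasurableSpace Ω] [MeasurableSpace F]
    (P : Measure Ω) [IsProbabilityMeasure P]
    (X : F × Ω → ℝ) (hX : Measurable X)
    (η : ℝ) (hη : 0 < η)
    (Q₀ : Measure F) [IsProbabilityMeasure Q₀]
    (Qhat : Kernel Ω F) [IsMarkovKernel Qhat]
    (hac : ∀ ω, Qhat ω ≪ Q₀ ∧ Q₀ ≪ Qhat ω)
    (hint_inner : ∀ ω, Integrable (fun f => Real.exp (η * X (f, ω))) Q₀)
    (hint_outer : Integrable (fun ω => ∫ f, Real.exp (η * X (f, ω)) ∂Q₀) P)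
    (hXint : ∀ ω, Integrable (fun f => X (f, ω)) (Qhat ω))
    (hKLint : ∀ ω, Integrable (fun f => Real.log ((Qhat ω).rnDeriv Q₀ f).toReal) (Qhat ω)) :
    ∫⁻ ω, ENNReal.ofReal (Real.exp (η *
        ((∫ f, X (f, ω) ∂(Qhat ω)) -
          (1 / η) * Real.log (∫ ω', ∫ f, Real.exp (η * X (f, ω')) ∂Q₀ ∂P)) -
        ∫ f, Real.log ((Qhat ω).rnDeriv Q₀ f).toReal ∂(Qhat ω))) ∂P ≤ 1 := by
  set Z : Ω → ℝ := fun ω => ∫ f, Real.exp (η * X (f, ω)) ∂Q₀ with hZ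
  set A : ℝ := ∫ ω', Z ω' ∂P with hA
  have hZpos : ∀ ω, 0 < Z ω := fun ω => integral_exp_pos (hint_inner ω)
  have hApos : 0 < A := by
    rw [hA, integral_pos_iff_support_of_nonneg (fun ω => (hZpos ω).le) hint_outer]
    have hsupp : Function.support Z = Set.univ := by
      ext ω; simp [(hZpos ω).ne']
    rw [hsupp]
    simp
  -- pointwise bound
  have hpt : ∀ ω, Real.exp (η *
        ((∫ f, X (f, ω) ∂(Qhat ω)) - (1 / η) * Real.log A) -
        ∫ f, Real.log ((Qhat ω).rnDeriv Q₀ f).toReal ∂(Qhat ω)) ≤ Z ω * A⁻¹ := by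
    intro ω
    have hYint : Integrable (fun f => η * X (f, ω)) (Qhat ω) := (hXint ω).const_mul η
    have hdv := dv_pointwise Q₀ (Qhat ω) (hac ω).1 (hac ω).2
      (fun f => η * X (f, ω)) (hint_inner ω) hYint (hKLint ω)
    have hintY : ∫ f, η * X (f, ω) ∂(Qhat ω) = η * ∫ f, X (f, ω) ∂(Qhat ω) :=
      integral_const_mul _ _
    rw [hintY] at hdv
    have hexpand : η * ((∫ f, X (f, ω) ∂(Qhat ω)) - (1 / η) * Real.log A) -
        ∫ f, Real.log ((Qhat ω).rnDeriv Q₀ f).toReal ∂(Qhat ω)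
        = (η * (∫ f, X (f, ω) ∂(Qhat ω)) -
            ∫ f, Real.log ((Qhat ω).rnDeriv Q₀ f).toReal ∂(Qhat ω)) - Real.log A := by
      field_simp
      ring
    rw [hexpand, Real.exp_sub, Real.exp_log hApos, div_eq_mul_inv]
    exact mul_le_mul_of_nonneg_right hdv (inv_nonneg.mpr hApos.le)
  calc ∫⁻ ω, ENNReal.ofReal (Real.exp (η *
        ((∫ f, X (f, ω) ∂(Qhat ω)) - (1 / η) * Real.log A) -
        ∫ f, Real.log ((Qhat ω).rnDeriv Q₀ f).toReal ∂(Qhat ω))) ∂P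
      ≤ ∫⁻ ω, ENNReal.ofReal (Z ω * A⁻¹) ∂P := by
        exact lintegral_mono fun ω => ENNReal.ofReal_le_ofReal (hpt ω)
    _ = ENNReal.ofReal (∫ ω, Z ω * A⁻¹ ∂P) := by
        rw [← ofReal_integral_eq_lintegral_ofReal (hint_outer.mul_const _)
          (Filter.Eventually.of_forall fun ω => mul_nonneg (hZpos ω).le (inv_nonneg.mpr hApos.le))]
    _ = 1 := by
        rw [integral_mul_const, ← hA, mul_inv_cancel₀ hApos.ne']
        simp
end

section
/- (PAC-Bayes for ESI families.) Let (Ω, 𝓐, P) be a probability space, (F, 𝓑) a measurable space, X : F × Ω → ℝ jointly measurable, η > 0, Π₀ a probability measure on F, and ω ↦ Π̂(ω) a Markov kernel from Ω to F such that Π̂(ω) and Π₀ are mutually absolutely continuous for every ω. Suppose that for every f ∈ F, E_{ω∼P}[exp(η·X(f,ω))] ≤ 1. Then E_{ω∼P}[ exp( η·∫ X(f,ω) dΠ̂(ω)(f) − KL(Π̂(ω) ‖ Π₀) ) ] ≤ 1; in particular, for every δ ∈ (0,1], with P-probability at least 1 − δ, ∫ X(f,ω) dΠ̂(ω)(f)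 ≤ ( KL(Π̂(ω) ‖ Π₀) + log(1/δ) ) / η. -/
open MeasureTheory ProbabilityTheory
open scoped ENNReal

lemma key_pointwise {F : Type*} [MeasurableSpace F]
    (μ ν : Measure F) [IsProbabilityMeasure μ] [IsProbabilityMeasure ν]
    (hμν : μ ≪ ν) (hνμ : ν ≪ μ)
    (Y : F → ℝ) (hY : Measurable Y) (hYint : Integrable Y μ)
    (hLint : Integrable (fun f => Real.log (μ.rnDeriv ν f).toReal) μ) :
    ENNReal.ofReal (Real.exp ((∫ f, Y f ∂μ) - ∫ f, Real.log (μ.rnDeriv ν f).toReal ∂μ)) ≤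
      ∫⁻ f, ENNReal.ofReal (Real.exp (Y f)) ∂ν := by
  set g : F → ℝ := fun f => Y f - Real.log (μ.rnDeriv ν f).toReal with hg
  have hgm : Measurable g :=
    hY.sub ((Real.measurable_log.comp (Measure.measurable_rnDeriv μ ν).ennreal_toReal))
  have hgint : Integrable g μ := hYint.sub hLint
  -- rewrite RHS as lintegral over μ
  have h1 : ∫⁻ f, ENNReal.ofReal (Real.exp (Y f)) ∂ν
      = ∫⁻ f, ENNReal.ofReal (Real.exp (g f)) ∂μ := by
    rw [← MeasureTheory.lintegral_rnDeriv_mul hνμ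
      ((hY.exp.ennreal_ofReal).aemeasurable : AEMeasurable (fun f => ENNReal.ofReal (Real.exp (Y f))) μ)]
    refine lintegral_congr_ae ?_
    filter_upwards [Measure.inv_rnDeriv hμν, Measure.rnDeriv_pos hμν,
      hμν.ae_le (Measure.rnDeriv_ne_top μ ν)] with f hinv hpos htop
    have ht : 0 < (μ.rnDeriv ν f).toReal := ENNReal.toReal_pos hpos.ne' htop
    rw [← hinv]
    simp only [Pi.inv_apply]
    rw [Real.exp_sub, div_eq_mul_inv, ENNReal.ofReal_mul (Real.exp_nonneg _),
      Real.exp_log ht]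
    rw [ENNReal.ofReal_inv_of_pos ht, ENNReal.ofReal_toReal htop]
    ring
  rw [h1]
  -- Jensen
  by_cases hfin : ∫⁻ f, ENNReal.ofReal (Real.exp (g f)) ∂μ = ⊤
  · simp [hfin]
  · have hexpint : Integrable (fun f => Real.exp (g f)) μ := by
      refine ⟨(hgm.exp).aestronglyMeasurable, ?_⟩
      rw [hasFiniteIntegral_iff_ofReal (Filter.Eventually.of_forall fun _ => Real.exp_nonneg _)]
      exact Ne.lt_top hfin
    have hjen : Real.exp (∫ f, g f ∂μ) ≤ ∫ f, Real.exp (g f) ∂μ :=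
      convexOn_exp.map_integral_le Real.continuous_exp.continuousOn isClosed_univ
        (Filter.Eventually.of_forall (fun _ => trivial)) hgint hexpint
    have h2 : ∫⁻ f, ENNReal.ofReal (Real.exp (g f)) ∂μ
        = ENNReal.ofReal (∫ f, Real.exp (g f) ∂μ) :=
      (ofReal_integral_eq_lintegral_ofReal hexpint
        (Filter.Eventually.of_forall fun _ => Real.exp_nonneg _)).symm
    rw [h2, integral_sub hYint hLint] at *
    exact ENNReal.ofReal_le_ofReal hjen

/-- PAC-Bayes for ESI families: if `X_f ⊴_η 0` for every `f`, then
`E_Π̂[X] ⊴_η KL(Π̂‖Π₀)/η`, with the corresponding high-probability bound.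
Here `Q₀` is the prior `Π₀` and `Qhat` the posterior kernel `Π̂`. -/
theorem pac_bayes_esi_family {Ω F : Type*} [MeasurableSpace Ω] [MeasurableSpace F]
    (P : Measure Ω) [IsProbabilityMeasure P]
    (X : F × Ω → ℝ) (hX : Measurable X)
    (η : ℝ) (hη : 0 < η)
    (Q₀ : Measure F) [IsProbabilityMeasure Q₀]
    (Qhat : Kernel Ω F) [IsMarkovKernel Qhat]
    (hac : ∀ ω, Qhat ω ≪ Q₀ ∧ Q₀ ≪ Qhat ω)
    (hXint : ∀ ω, Integrable (fun f => X (f, ω)) (Qhat ω))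
    (hKLint : ∀ ω, Integrable (fun f => Real.log ((Qhat ω).rnDeriv Q₀ f).toReal) (Qhat ω))
    (hESI : ∀ f, ∫⁻ ω, ENNReal.ofReal (Real.exp (η * X (f, ω))) ∂P ≤ 1) :
    (∫⁻ ω, ENNReal.ofReal (Real.exp (η * (∫ f, X (f, ω) ∂(Qhat ω)) -
        ∫ f, Real.log ((Qhat ω).rnDeriv Q₀ f).toReal ∂(Qhat ω))) ∂P ≤ 1) ∧
    (∀ δ : ℝ, 0 < δ → δ ≤ 1 →
      1 - ENNReal.ofReal δ ≤
        P {ω | (∫ f, X (f, ω) ∂(Qhat ω)) ≤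
          ((∫ f, Real.log ((Qhat ω).rnDeriv Q₀ f).toReal ∂(Qhat ω)) +
            Real.log (1 / δ)) / η}) := by
  set m : Ω → ℝ := fun ω => ∫ f, X (f, ω) ∂(Qhat ω) with hm
  set K : Ω → ℝ := fun ω => ∫ f, Real.log ((Qhat ω).rnDeriv Q₀ f).toReal ∂(Qhat ω) with hK
  set h : Ω → ℝ≥0∞ := fun ω => ∫⁻ f, ENNReal.ofReal (Real.exp (η * X (f, ω))) ∂Q₀ with hh
  have hFmeas : Measurable fun p : Ω × F => ENNReal.ofReal (Real.exp (η * X (p.2, p.1))) := by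
    have : Measurable fun p : Ω × F => X (p.2, p.1) :=
      hX.comp (measurable_snd.prodMk measurable_fst)
    exact ((this.const_mul η).exp).ennreal_ofReal
  have hhmeas : Measurable h := hFmeas.lintegral_prod_right'
  have hhint : ∫⁻ ω, h ω ∂P ≤ 1 := by
    have hswap := lintegral_lintegral_swap (μ := P) (ν := Q₀)
      (f := fun ω f => ENNReal.ofReal (Real.exp (η * X (f, ω)))) hFmeas.aemeasurable
    rw [hh, hswap]
    calc ∫⁻ f, ∫⁻ ω, ENNReal.ofReal (Real.exp (η * X (f, ω))) ∂P ∂Q₀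
        ≤ ∫⁻ _, 1 ∂Q₀ := lintegral_mono fun f => hESI f
      _ = 1 := by simp
  have hkey : ∀ ω, ENNReal.ofReal (Real.exp (η * m ω - K ω)) ≤ h ω := by
    intro ω
    have hYm : Measurable fun f => η * X (f, ω) :=
      (hX.comp ((measurable_id.prodMk measurable_const : Measurable fun f : F => (f, ω)))).const_mul η
    have := key_pointwise (Qhat ω) Q₀ (hac ω).1 (hac ω).2 (fun f => η * X (f, ω)) hYm
      ((hXint ω).const_mul η) (hKLint ω)
    rwa [integral_const_mul] at this
  refine ⟨le_trans (lintegral_mono fun ω => hkey ω) hhint, ?_⟩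
  intro δ hδ hδ1
  set T : Set Ω := {ω | m ω ≤ (K ω + Real.log (1 / δ)) / η} with hT
  have hsub : Tᶜ ⊆ {ω | ENNReal.ofReal (1 / δ) ≤ h ω} := by
    intro ω hω
    have hlt : (K ω + Real.log (1 / δ)) / η < m ω := lt_of_not_ge hω
    have h2 : Real.log (1 / δ) < η * m ω - K ω := by
      have := (div_lt_iff₀' hη).mp hlt
      linarith
    have h3 : 1 / δ < Real.exp (η * m ω - K ω) := by
      calc 1 / δ = Real.exp (Real.log (1 / δ)) :=
            (Real.exp_log (by positivity)).symm
        _ < Real.exp (η * m ω - K ω) := Real.exp_lt_exp.mpr h2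
    exact le_trans (ENNReal.ofReal_le_ofReal h3.le) (hkey ω)
  have hmarkov : ENNReal.ofReal (1 / δ) * P {ω | ENNReal.ofReal (1 / δ) ≤ h ω} ≤ 1 :=
    le_trans (mul_meas_ge_le_lintegral₀ hhmeas.aemeasurable _) hhint
  have hPT : P Tᶜ ≤ ENNReal.ofReal δ := by
    have hne : ENNReal.ofReal (1 / δ) ≠ 0 := by
      simp [ENNReal.ofReal_eq_zero, not_le, hδ]
    have hPc : P {ω | ENNReal.ofReal (1 / δ) ≤ h ω} ≤ (ENNReal.ofReal (1 / δ))⁻¹ :=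
      ENNReal.le_inv_iff_mul_le.mpr (by rwa [mul_comm])
    have hinv : (ENNReal.ofReal (1 / δ))⁻¹ = ENNReal.ofReal δ := by
      rw [one_div, ENNReal.ofReal_inv_of_pos hδ, inv_inv]
    exact le_trans (measure_mono hsub) (hinv ▸ hPc)
  have hunion : (1 : ℝ≥0∞) ≤ P T + P Tᶜ := by
    have : P (T ∪ Tᶜ) ≤ P T + P Tᶜ := measure_union_le _ _
    simpa [Set.union_compl_self] using this
  rw [tsub_le_iff_right]
  calc (1 : ℝ≥0∞) ≤ P T + P Tᶜ := hunion
    _ ≤ P T + ENNReal.ofReal δ := add_le_add_right hPT _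
end
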